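/- arXiv:2604.11726 — 8 statements merged into one kernel-verified Lean document; each statement's English description precedes it below -/
import Mathlib

section
/- Let (A,B,C,D) be a linear system with n, m, p ∈ ℕ, and let ℓ ∈ ℕ satisfy ℓ ≥ ℓ(C,A). Let T₁, T₂ ∈ ℕ with ℓ ≤ T₁ and ℓ ≤ T₂. Let (u¹, y¹) be a trajectory of length T₁ of (A,B,C,D) and (u², y²) a trajectory of length T₂ of (A,B,C,D) such that u¹(T₁−ℓ+i) = u²(i) and y¹(T₁−ℓ+i) = y²(i) for all 0 ≤ i ≤ ℓ−1. Then the weaved pair (u, y) of length T₁+T₂−ℓ, defined by u(t) = u¹(t), y(t) = y¹(t) for 0 ≤ t ≤ T₁−1 and u(T₁−ℓ+s) = u²(s), y(T₁−ℓ+s) = y²(s) for ℓ ≤ s ≤ T₂−1, is a trajectory of length T₁+T₂−ℓ of (A,B,C,D). -/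
/-- `(u, y)` is a trajectory of length `T` of the linear system `(A, B, C, D)`. -/
def IsTraj {n m p : ℕ} (A : Matrix (Fin n) (Fin n) ℝ) (B : Matrix (Fin n) (Fin m) ℝ)
    (C : Matrix (Fin p) (Fin n) ℝ) (D : Matrix (Fin p) (Fin m) ℝ)
    (T : ℕ) (u : Fin T → Fin m → ℝ) (y : Fin T → Fin p → ℝ) : Prop :=
  ∃ x : Fin (T + 1) → Fin n → ℝ,
    ∀ t : Fin T,
      x t.succ = A.mulVec (x t.castSucc) + B.mulVec (u t) ∧
      y t = C.mulVec (x t.castSucc) + D.mulVec (u t)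

/-- Observability matrix of depth `k` of the pair `(C, A)`. -/
noncomputable def obsMat {n p : ℕ} (A : Matrix (Fin n) (Fin n) ℝ)
    (C : Matrix (Fin p) (Fin n) ℝ) (k : ℕ) : Matrix (Fin k × Fin p) (Fin n) ℝ :=
  fun ir j => (C * A ^ (ir.1 : ℕ)) ir.2 j

/-- The lag of the pair `(C, A)`: the least `k` with `rank O_k = rank O_{k+1}`. -/
noncomputable def lag {n p : ℕ} (A : Matrix (Fin n) (Fin n) ℝ)
    (C : Matrix (Fin p) (Fin n) ℝ) : ℕ :=
  sInf {k | (obsMat A C k).rank = (obsMat A C (k + 1)).rank}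

lemma mem_ker_obs {n p : ℕ} (A : Matrix (Fin n) (Fin n) ℝ)
    (C : Matrix (Fin p) (Fin n) ℝ) (k : ℕ) (x : Fin n → ℝ) :
    x ∈ LinearMap.ker (obsMat A C k).mulVecLin ↔
      ∀ i : ℕ, i < k → (C * A ^ i).mulVec x = 0 := by
  simp only [LinearMap.mem_ker, Matrix.mulVecLin_apply]
  constructor
  · intro h i hi
    funext r
    have := congrFun h (⟨i, hi⟩, r)
    simpa [obsMat, Matrix.mulVec, dotProduct] using this
  · intro h
    funext ir
    have := congrFun (h ir.1 ir.1.2) ir.2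
    simpa [obsMat, Matrix.mulVec, dotProduct] using this

lemma ker_obs_antitone {n p : ℕ} (A : Matrix (Fin n) (Fin n) ℝ)
    (C : Matrix (Fin p) (Fin n) ℝ) {k l : ℕ} (h : k ≤ l) :
    LinearMap.ker (obsMat A C l).mulVecLin ≤ LinearMap.ker (obsMat A C k).mulVecLin := by
  intro x hx
  rw [mem_ker_obs] at hx ⊢
  exact fun i hi => hx i (lt_of_lt_of_le hi h)

lemma rank_obs_mono {n p : ℕ} (A : Matrix (Fin n) (Fin n) ℝ)
    (C : Matrix (Fin p) (Fin n) ℝ) {k l : ℕ} (h : k ≤ l) :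
    (obsMat A C k).rank ≤ (obsMat A C l).rank := by
  have h1 := LinearMap.finrank_range_add_finrank_ker (obsMat A C k).mulVecLin
  have h2 := LinearMap.finrank_range_add_finrank_ker (obsMat A C l).mulVecLin
  have h3 := Submodule.finrank_mono (ker_obs_antitone A C h)
  show Module.finrank ℝ _ ≤ Module.finrank ℝ _
  omega

lemma ker_eq_of_rank_eq {n p : ℕ} (A : Matrix (Fin n) (Fin n) ℝ)
    (C : Matrix (Fin p) (Fin n) ℝ) {k : ℕ}
    (h : (obsMat A C k).rank = (obsMat A C (k+1)).rank) :
    LinearMap.ker (obsMat A C (k+1)).mulVecLin = LinearMap.ker (obsMat A C k).mulVecLin := by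
  have h1 := LinearMap.finrank_range_add_finrank_ker (obsMat A C k).mulVecLin
  have h2 := LinearMap.finrank_range_add_finrank_ker (obsMat A C (k+1)).mulVecLin
  have hr : Module.finrank ℝ (LinearMap.range (obsMat A C k).mulVecLin)
      = Module.finrank ℝ (LinearMap.range (obsMat A C (k+1)).mulVecLin) := h
  exact Submodule.eq_of_le_of_finrank_eq (ker_obs_antitone A C (Nat.le_succ k)) (by omega)

lemma ker_step {n p : ℕ} (A : Matrix (Fin n) (Fin n) ℝ)
    (C : Matrix (Fin p) (Fin n) ℝ) {k : ℕ}
    (h : LinearMap.ker (obsMat A C (k+1)).mulVecLin = LinearMap.ker (obsMat A C k).mulVecLin) :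
    LinearMap.ker (obsMat A C (k+2)).mulVecLin = LinearMap.ker (obsMat A C (k+1)).mulVecLin := by
  apply le_antisymm (ker_obs_antitone A C (Nat.le_succ _))
  intro x hx
  rw [mem_ker_obs] at hx ⊢
  intro i hi
  rcases Nat.lt_or_ge i (k+1) with h' | h'
  · exact hx i h'
  · have hik : i = k + 1 := by omega
    subst hik
    have hAx : A.mulVec x ∈ LinearMap.ker (obsMat A C (k+1)).mulVecLin := by
      rw [h, mem_ker_obs]
      intro j hj
      have := hx (j+1) (by omega)
      rw [Matrix.mulVec_mulVec]
      calc (C * A ^ j * A).mulVec x = (C * A ^ (j+1)).mulVec x := by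
            rw [pow_succ, Matrix.mul_assoc]
      _ = 0 := this
    rw [mem_ker_obs] at hAx
    have := hAx k (by omega)
    rw [Matrix.mulVec_mulVec] at this
    calc (C * A ^ (k+1)).mulVec x = (C * A ^ k * A).mulVec x := by
          rw [pow_succ, Matrix.mul_assoc]
    _ = 0 := this

lemma lag_set_nonempty {n p : ℕ} (A : Matrix (Fin n) (Fin n) ℝ)
    (C : Matrix (Fin p) (Fin n) ℝ) :
    {k | (obsMat A C k).rank = (obsMat A C (k + 1)).rank}.Nonempty := by
  by_contra hne
  have hsm : StrictMono (fun k => (obsMat A C k).rank) := by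
    apply strictMono_nat_of_lt_succ
    intro k
    have h1 : (obsMat A C k).rank ≤ (obsMat A C (k+1)).rank := rank_obs_mono A C (Nat.le_succ k)
    have h2 : (obsMat A C k).rank ≠ (obsMat A C (k+1)).rank := by
      intro h; exact hne ⟨k, h⟩
    omega
  have := hsm.le_apply (x := n+1)
  have h3 : (obsMat A C (n+1)).rank ≤ n := by
    simpa using Matrix.rank_le_card_width (obsMat A C (n+1))
  omega

lemma ker_obs_step_all {n p : ℕ} (A : Matrix (Fin n) (Fin n) ℝ)
    (C : Matrix (Fin p) (Fin n) ℝ) :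
    ∀ j : ℕ, LinearMap.ker (obsMat A C (lag A C + j + 1)).mulVecLin
      = LinearMap.ker (obsMat A C (lag A C + j)).mulVecLin := by
  have hmem : lag A C ∈ {k | (obsMat A C k).rank = (obsMat A C (k + 1)).rank} :=
    Nat.sInf_mem (lag_set_nonempty A C)
  intro j
  induction j with
  | zero => exact ker_eq_of_rank_eq A C hmem
  | succ j ih => exact ker_step A C ih

lemma ker_obs_stable {n p : ℕ} (A : Matrix (Fin n) (Fin n) ℝ)
    (C : Matrix (Fin p) (Fin n) ℝ) :
    ∀ j : ℕ, LinearMap.ker (obsMat A C (lag A C + j)).mulVecLin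
      = LinearMap.ker (obsMat A C (lag A C)).mulVecLin := by
  intro j
  induction j with
  | zero => rfl
  | succ j ih => rw [← ih]; exact ker_obs_step_all A C j

lemma key_lemma {n p : ℕ} (A : Matrix (Fin n) (Fin n) ℝ)
    (C : Matrix (Fin p) (Fin n) ℝ) {l : ℕ} (hl : lag A C ≤ l) (x : Fin n → ℝ)
    (hx : ∀ i : ℕ, i < l → (C * A ^ i).mulVec x = 0) :
    ∀ j : ℕ, (C * A ^ j).mulVec x = 0 := by
  intro j
  have hmemℓ : x ∈ LinearMap.ker (obsMat A C l).mulVecLin := (mem_ker_obs A C l x).mpr hx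
  have hlag : x ∈ LinearMap.ker (obsMat A C (lag A C)).mulVecLin := by
    rcases Nat.exists_eq_add_of_le hl with ⟨d, hd⟩
    rw [← ker_obs_stable A C d, ← hd] at *
    exact hmemℓ
  have : x ∈ LinearMap.ker (obsMat A C (lag A C + (j+1))).mulVecLin := by
    rw [ker_obs_stable A C (j+1)]; exact hlag
  rw [mem_ker_obs] at this
  exact this j (by omega)

/-- Weaving: two trajectories agreeing on an overlap of length `ℓ ≥ ℓ(C,A)` can be
weaved into a single trajectory of length `T₁ + T₂ - ℓ`. -/
theorem weaving {n m p : ℕ} (A : Matrix (Fin n) (Fin n) ℝ) (B : Matrix (Fin n) (Fin m) ℝ)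
    (C : Matrix (Fin p) (Fin n) ℝ) (D : Matrix (Fin p) (Fin m) ℝ)
    (ℓ T₁ T₂ : ℕ) (hℓ : lag A C ≤ ℓ) (h1 : ℓ ≤ T₁) (h2 : ℓ ≤ T₂)
    (u1 : Fin T₁ → Fin m → ℝ) (y1 : Fin T₁ → Fin p → ℝ)
    (u2 : Fin T₂ → Fin m → ℝ) (y2 : Fin T₂ → Fin p → ℝ)
    (ht1 : IsTraj A B C D T₁ u1 y1) (ht2 : IsTraj A B C D T₂ u2 y2)
    (hu : ∀ i : Fin ℓ, u1 ⟨T₁ - ℓ + i, by have := i.2; omega⟩ = u2 ⟨i, by have := i.2; omega⟩)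
    (hy : ∀ i : Fin ℓ, y1 ⟨T₁ - ℓ + i, by have := i.2; omega⟩ = y2 ⟨i, by have := i.2; omega⟩) :
    IsTraj A B C D (T₁ + (T₂ - ℓ))
      (Fin.append u1 (fun s : Fin (T₂ - ℓ) => u2 ⟨ℓ + s, by have := s.2; omega⟩))
      (Fin.append y1 (fun s : Fin (T₂ - ℓ) => y2 ⟨ℓ + s, by have := s.2; omega⟩)) := by
  obtain ⟨x1, hx1⟩ := ht1
  obtain ⟨x2, hx2⟩ := ht2
  set e : Fin n → ℝ := x1 ⟨T₁ - ℓ, by omega⟩ - x2 ⟨0, by omega⟩ with he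
  -- Claim 1: states on the overlap differ by A^i e
  have claim1 : ∀ i : ℕ, (hi : i ≤ ℓ) →
      x1 ⟨T₁ - ℓ + i, by omega⟩ = x2 ⟨i, by omega⟩ + (A ^ i).mulVec e := by
    intro i
    induction i with
    | zero =>
      intro _
      simp only [pow_zero, Matrix.one_mulVec, he, Nat.add_zero]
      abel
    | succ i ih =>
      intro hi
      have hi' : i ≤ ℓ := by omega
      have hlt1 : T₁ - ℓ + i < T₁ := by omega
      have hlt2 : i < T₂ := by omega
      have d1 := (hx1 ⟨T₁ - ℓ + i, hlt1⟩).1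
      have d2 := (hx2 ⟨i, hlt2⟩).1
      rw [Fin.succ_mk, Fin.castSucc_mk] at d1 d2
      have huu := hu ⟨i, by omega⟩
      simp only at huu
      rw [show (⟨T₁ - ℓ + i + 1, by omega⟩ : Fin (T₁+1)) = ⟨T₁ - ℓ + (i+1), by omega⟩ from Fin.ext rfl] at d1
      rw [d1, ih hi', huu, d2, Matrix.mulVec_add, Matrix.mulVec_mulVec, ← pow_succ']
      abel
  -- Claim 2: e is in the kernel of the depth-ℓ observability matrix
  have claim2 : ∀ i : ℕ, i < ℓ → (C * A ^ i).mulVec e = 0 := by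
    intro i hi
    have o1 := (hx1 ⟨T₁ - ℓ + i, by omega⟩).2
    have o2 := (hx2 ⟨i, by omega⟩).2
    rw [Fin.castSucc_mk] at o1 o2
    have huu := hu ⟨i, hi⟩
    have hyy := hy ⟨i, hi⟩
    simp only at huu hyy
    rw [o1, o2, huu, claim1 i (by omega), Matrix.mulVec_add, Matrix.mulVec_mulVec] at hyy
    have : C.mulVec (x2 ⟨i, by omega⟩) + ((C * A ^ i).mulVec e + D.mulVec (u2 ⟨i, by omega⟩))
        = C.mulVec (x2 ⟨i, by omega⟩) + D.mulVec (u2 ⟨i, by omega⟩) := by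
      rw [← hyy]; abel
    have h0 := add_left_cancel this
    exact add_right_cancel (h0.trans (zero_add _).symm)
  have hCA : ∀ j : ℕ, (C * A ^ j).mulVec e = 0 := key_lemma A C hℓ e claim2
  -- the weaved state
  set xw : Fin (T₁ + (T₂ - ℓ) + 1) → Fin n → ℝ := fun t =>
    if h : (t : ℕ) ≤ T₁ then x1 ⟨t, by omega⟩
    else x2 ⟨ℓ + ((t : ℕ) - T₁), by have := t.2; omega⟩
      + (A ^ (ℓ + ((t : ℕ) - T₁))).mulVec e with hxw
  have hle : ∀ (t : Fin (T₁ + (T₂ - ℓ) + 1)) (h : (t : ℕ) ≤ T₁),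
      xw t = x1 ⟨t, by omega⟩ := by
    intro t h
    simp only [hxw, dif_pos h]
  have hge : ∀ (t : Fin (T₁ + (T₂ - ℓ) + 1)) (h : T₁ ≤ (t : ℕ)),
      xw t = x2 ⟨ℓ + ((t : ℕ) - T₁), by have := t.2; omega⟩
        + (A ^ (ℓ + ((t : ℕ) - T₁))).mulVec e := by
    intro t h
    rcases Nat.lt_or_ge T₁ (t : ℕ) with h' | h'
    · simp only [hxw, dif_neg (by omega : ¬ (t : ℕ) ≤ T₁)]
    · have ht : (t : ℕ) = T₁ := by omega
      rw [hle t (by omega)]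
      have hc := claim1 ℓ le_rfl
      rw [show (⟨T₁ - ℓ + ℓ, by omega⟩ : Fin (T₁ + 1)) = ⟨(t : ℕ), by omega⟩ from Fin.mk_eq_mk.mpr (by omega)] at hc
      rw [hc]
      simp only [show (t : ℕ) - T₁ = 0 from by omega, Nat.add_zero]
  refine ⟨xw, fun t => ?_⟩
  rcases Nat.lt_or_ge (t : ℕ) T₁ with tl | tg
  · -- left part: follows trajectory 1
    have hut : Fin.append u1 (fun s : Fin (T₂ - ℓ) => u2 ⟨ℓ + s, by have := s.2; omega⟩) t
        = u1 ⟨t, tl⟩ := by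
      have h := Fin.append_left u1 (fun s : Fin (T₂ - ℓ) => u2 ⟨ℓ + s, by have := s.2; omega⟩) ⟨t.1, tl⟩
      rwa [show Fin.castAdd (T₂ - ℓ) ⟨t.1, tl⟩ = t from Fin.ext rfl] at h
    have hyt : Fin.append y1 (fun s : Fin (T₂ - ℓ) => y2 ⟨ℓ + s, by have := s.2; omega⟩) t
        = y1 ⟨t, tl⟩ := by
      have h := Fin.append_left y1 (fun s : Fin (T₂ - ℓ) => y2 ⟨ℓ + s, by have := s.2; omega⟩) ⟨t.1, tl⟩
      rwa [show Fin.castAdd (T₂ - ℓ) ⟨t.1, tl⟩ = t from Fin.ext rfl] at h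
    have hcs : xw t.castSucc = x1 ⟨t, by omega⟩ := by
      rw [hle t.castSucc (by simp [Fin.coe_castSucc]; omega)]
      simp [Fin.coe_castSucc]
    have hsc : xw t.succ = x1 ⟨(t : ℕ) + 1, by omega⟩ := by
      rw [hle t.succ (by simp [Fin.val_succ]; omega)]
      simp [Fin.val_succ]
    have d1 := (hx1 ⟨t.1, tl⟩).1
    have o1 := (hx1 ⟨t.1, tl⟩).2
    simp only [Fin.succ_mk, Fin.castSucc_mk] at d1 o1
    rw [hut, hyt, hcs, hsc]
    exact ⟨d1, o1⟩
  · -- right part: follows trajectory 2 shifted, plus kernel correction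
    have hs : (t : ℕ) - T₁ < T₂ - ℓ := by have := t.2; omega
    have hut : Fin.append u1 (fun s : Fin (T₂ - ℓ) => u2 ⟨ℓ + s, by have := s.2; omega⟩) t
        = u2 ⟨ℓ + ((t : ℕ) - T₁), by omega⟩ := by
      have h := Fin.append_right u1 (fun s : Fin (T₂ - ℓ) => u2 ⟨ℓ + s, by have := s.2; omega⟩) ⟨(t : ℕ) - T₁, hs⟩
      rwa [show Fin.natAdd T₁ ⟨(t : ℕ) - T₁, hs⟩ = t from Fin.ext (by simp; omega)] at h
    have hyt : Fin.append y1 (fun s : Fin (T₂ - ℓ) => y2 ⟨ℓ + s, by have := s.2; omega⟩) t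
        = y2 ⟨ℓ + ((t : ℕ) - T₁), by omega⟩ := by
      have h := Fin.append_right y1 (fun s : Fin (T₂ - ℓ) => y2 ⟨ℓ + s, by have := s.2; omega⟩) ⟨(t : ℕ) - T₁, hs⟩
      rwa [show Fin.natAdd T₁ ⟨(t : ℕ) - T₁, hs⟩ = t from Fin.ext (by simp; omega)] at h
    have hcs : xw t.castSucc = x2 ⟨ℓ + ((t : ℕ) - T₁), by omega⟩
        + (A ^ (ℓ + ((t : ℕ) - T₁))).mulVec e := by
      rw [hge t.castSucc (by simp [Fin.coe_castSucc]; omega)]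
      simp [Fin.coe_castSucc]
    have hsc : xw t.succ = x2 ⟨ℓ + ((t : ℕ) - T₁) + 1, by omega⟩
        + (A ^ (ℓ + ((t : ℕ) - T₁) + 1)).mulVec e := by
      rw [hge t.succ (by simp [Fin.val_succ]; omega)]
      have hq : (t : ℕ) + 1 - T₁ = ((t : ℕ) - T₁) + 1 := by omega
      simp only [Fin.val_succ, hq, ← Nat.add_assoc]
    have d2 := (hx2 ⟨ℓ + ((t : ℕ) - T₁), by omega⟩).1
    have o2 := (hx2 ⟨ℓ + ((t : ℕ) - T₁), by omega⟩).2
    simp only [Fin.succ_mk, Fin.castSucc_mk] at d2 o2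
    rw [hut, hyt, hcs, hsc]
    constructor
    · rw [d2, Matrix.mulVec_add, Matrix.mulVec_mulVec, ← pow_succ']
      abel
    · rw [o2, Matrix.mulVec_add, Matrix.mulVec_mulVec, hCA]
      abel
end

section
/- Let (A,B,C,D) be a linear system and let ℓ = ℓ(C,A). Let T_ini ∈ ℕ, T_f ∈ ℕ with T_f ≥ 1, let (u_ini, y_ini) be a trajectory of length T_ini of (A,B,C,D), and let u_f : {0,…,T_f−1} → ℝ^m. Then there exists a unique y_f : {0,…,T_f−1} → ℝ^p such that the concatenation (u_ini·u_f, y_ini·y_f) is a trajectory of length T_ini+T_f of (A,B,C,D) if and only if T_ini ≥ ℓ. -/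
open Matrix Module

variable {n m p : ℕ}

/-- State evolution from `x0` under input `u`. -/
def stSeq (A : Matrix (Fin n) (Fin n) ℝ) (B : Matrix (Fin n) (Fin m) ℝ)
    (u : ℕ → Fin m → ℝ) (x0 : Fin n → ℝ) : ℕ → Fin n → ℝ
  | 0 => x0
  | t + 1 => A.mulVec (stSeq A B u x0 t) + B.mulVec (u t)

lemma stSeq_congr (A : Matrix (Fin n) (Fin n) ℝ) (B : Matrix (Fin n) (Fin m) ℝ)
    {u1 u2 : ℕ → Fin m → ℝ} (x0 : Fin n → ℝ) :
    ∀ t, (∀ s < t, u1 s = u2 s) → stSeq A B u1 x0 t = stSeq A B u2 x0 t := by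
  intro t
  induction t with
  | zero => intro _; rfl
  | succ t ih =>
    intro h
    simp only [stSeq, ih (fun s hs => h s (hs.trans (Nat.lt_succ_self t))),
      h t (Nat.lt_succ_self t)]

lemma stSeq_add (A : Matrix (Fin n) (Fin n) ℝ) (B : Matrix (Fin n) (Fin m) ℝ)
    (u : ℕ → Fin m → ℝ) (x0 v : Fin n → ℝ) :
    ∀ t, stSeq A B u (x0 + v) t = stSeq A B u x0 t + (A ^ t).mulVec v := by
  intro t
  induction t with
  | zero => simp [stSeq]
  | succ t ih =>
    simp only [stSeq, ih, Matrix.mulVec_add, Matrix.mulVec_mulVec, pow_succ']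
    abel

/-- Characterization of trajectories via the state sequence. -/
lemma isTraj_iff (A : Matrix (Fin n) (Fin n) ℝ) (B : Matrix (Fin n) (Fin m) ℝ)
    (C : Matrix (Fin p) (Fin n) ℝ) (D : Matrix (Fin p) (Fin m) ℝ)
    (T : ℕ) (u : Fin T → Fin m → ℝ) (y : Fin T → Fin p → ℝ)
    (uext : ℕ → Fin m → ℝ) (hu : ∀ t : Fin T, uext t = u t) :
    IsTraj A B C D T u y ↔
      ∃ x0 : Fin n → ℝ, ∀ t : Fin T,
        y t = C.mulVec (stSeq A B uext x0 t) + D.mulVec (u t) := by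
  constructor
  · rintro ⟨x, hx⟩
    refine ⟨x 0, fun t => ?_⟩
    have key : ∀ s (hs : s ≤ T), x ⟨s, Nat.lt_succ_of_le hs⟩ = stSeq A B uext (x 0) s := by
      intro s
      induction s with
      | zero => intro _; rfl
      | succ s ih =>
        intro hs
        have hsT : s < T := hs
        have h1 := (hx ⟨s, hsT⟩).1
        have : (⟨s, hsT⟩ : Fin T).succ = ⟨s + 1, Nat.lt_succ_of_le hs⟩ := rfl
        rw [this] at h1
        have h2 : (⟨s, hsT⟩ : Fin T).castSucc = ⟨s, Nat.lt_succ_of_le (le_of_lt hsT)⟩ := rfl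
        rw [h1, h2, ih (le_of_lt hsT)]
        simp only [stSeq, hu ⟨s, hsT⟩]
    have h2 := (hx t).2
    have hc : t.castSucc = ⟨(t : ℕ), Nat.lt_succ_of_le (le_of_lt t.isLt)⟩ := rfl
    rw [h2, hc, key t (le_of_lt t.isLt)]
  · rintro ⟨x0, hx0⟩
    refine ⟨fun t => stSeq A B uext x0 t, fun t => ?_⟩
    constructor
    · show stSeq A B uext x0 ((t : ℕ) + 1) = _
      simp only [stSeq, Fin.coe_castSucc, hu t]
    · have := hx0 t
      simpa using this

/-- The kernel of the depth-`k` observability map, as a submodule. -/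
noncomputable def obsKer (A : Matrix (Fin n) (Fin n) ℝ)
    (C : Matrix (Fin p) (Fin n) ℝ) (k : ℕ) : Submodule ℝ (Fin n → ℝ) :=
  ⨅ i ∈ Finset.range k, LinearMap.ker ((C * A ^ i).mulVecLin)

lemma mem_obsKer {A : Matrix (Fin n) (Fin n) ℝ} {C : Matrix (Fin p) (Fin n) ℝ}
    {k : ℕ} {v : Fin n → ℝ} :
    v ∈ obsKer A C k ↔ ∀ i < k, (C * A ^ i).mulVec v = 0 := by
  simp [obsKer, Submodule.mem_iInf, LinearMap.mem_ker, Finset.mem_range]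

lemma obsKer_antitone (A : Matrix (Fin n) (Fin n) ℝ) (C : Matrix (Fin p) (Fin n) ℝ)
    {k l : ℕ} (h : k ≤ l) : obsKer A C l ≤ obsKer A C k := by
  intro v hv
  rw [mem_obsKer] at hv ⊢
  exact fun i hi => hv i (hi.trans_le h)

lemma ker_obsMat (A : Matrix (Fin n) (Fin n) ℝ) (C : Matrix (Fin p) (Fin n) ℝ) (k : ℕ) :
    LinearMap.ker ((obsMat A C k).mulVecLin) = obsKer A C k := by
  ext v
  rw [LinearMap.mem_ker, mem_obsKer]
  constructor
  · intro h i hi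
    funext r
    have := congrFun h (⟨i, hi⟩, r)
    simpa [obsMat, Matrix.mulVecLin_apply, Matrix.mulVec, dotProduct] using this
  · intro h
    funext ir
    obtain ⟨i, r⟩ := ir
    have := congrFun (h i i.isLt) r
    simpa [obsMat, Matrix.mulVecLin_apply, Matrix.mulVec, dotProduct] using this

lemma rank_eq_iff_obsKer_eq (A : Matrix (Fin n) (Fin n) ℝ) (C : Matrix (Fin p) (Fin n) ℝ)
    (k : ℕ) :
    (obsMat A C k).rank = (obsMat A C (k + 1)).rank ↔
      obsKer A C k = obsKer A C (k + 1) := by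
  have h1 := LinearMap.finrank_range_add_finrank_ker ((obsMat A C k).mulVecLin)
  have h2 := LinearMap.finrank_range_add_finrank_ker ((obsMat A C (k+1)).mulVecLin)
  rw [ker_obsMat] at h1 h2
  have hrk : (obsMat A C k).rank = finrank ℝ (LinearMap.range (obsMat A C k).mulVecLin) := rfl
  have hrk2 : (obsMat A C (k+1)).rank
      = finrank ℝ (LinearMap.range (obsMat A C (k+1)).mulVecLin) := rfl
  constructor
  · intro h
    refine (Submodule.eq_of_le_of_finrank_eq (obsKer_antitone A C (Nat.le_add_right k 1)) ?_).symm
    rw [hrk, hrk2] at h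
    omega
  · intro h
    rw [hrk, hrk2]
    rw [h] at h1
    omega

lemma obsKer_stab {A : Matrix (Fin n) (Fin n) ℝ} {C : Matrix (Fin p) (Fin n) ℝ} {k : ℕ}
    (h : obsKer A C k = obsKer A C (k + 1)) :
    ∀ j v, v ∈ obsKer A C k → (C * A ^ (k + j)).mulVec v = 0 := by
  intro j
  induction j with
  | zero =>
    intro v hv
    rw [h, mem_obsKer] at hv
    simpa using hv k (Nat.lt_succ_self k)
  | succ j ih =>
    intro v hv
    have hv' : v ∈ obsKer A C (k+1) := h ▸ hv
    rw [mem_obsKer] at hv'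
    have hAv : A.mulVec v ∈ obsKer A C k := by
      rw [mem_obsKer]
      intro i hi
      rw [Matrix.mulVec_mulVec, Matrix.mul_assoc, ← pow_succ]
      exact hv' (i+1) (by omega)
    have := ih (A.mulVec v) hAv
    rw [Matrix.mulVec_mulVec, Matrix.mul_assoc, ← pow_succ] at this
    simpa [Nat.add_assoc] using this

lemma obsKer_all {A : Matrix (Fin n) (Fin n) ℝ} {C : Matrix (Fin p) (Fin n) ℝ} {k : ℕ}
    (h : obsKer A C k = obsKer A C (k + 1)) {v : Fin n → ℝ} (hv : v ∈ obsKer A C k) :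
    ∀ i, (C * A ^ i).mulVec v = 0 := by
  intro i
  rcases lt_or_ge i k with hi | hi
  · exact mem_obsKer.mp hv i hi
  · obtain ⟨j, rfl⟩ := Nat.exists_eq_add_of_le hi
    exact obsKer_stab h j v hv

lemma lagSet_nonempty (A : Matrix (Fin n) (Fin n) ℝ) (C : Matrix (Fin p) (Fin n) ℝ) :
    {k | (obsMat A C k).rank = (obsMat A C (k + 1)).rank}.Nonempty := by
  by_contra h
  rw [Set.not_nonempty_iff_eq_empty, Set.eq_empty_iff_forall_notMem] at h
  have key : ∀ k : ℕ, finrank ℝ (obsKer A C k) + k ≤ n := by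
    intro k
    induction k with
    | zero =>
      simpa using (Submodule.finrank_le (obsKer A C 0)).trans_eq (finrank_fin_fun ℝ)
    | succ k ih =>
      have hne : obsKer A C k ≠ obsKer A C (k+1) := fun he =>
        h k ((rank_eq_iff_obsKer_eq A C k).mpr he)
      have hlt : finrank ℝ (obsKer A C (k+1)) < finrank ℝ (obsKer A C k) := by
        rcases lt_or_eq_of_le (Submodule.finrank_mono (obsKer_antitone A C (Nat.le_succ k)))
          with h' | h'
        · exact h'
        · exact absurd (Submodule.eq_of_le_of_finrank_eq
            (obsKer_antitone A C (Nat.le_succ k)) h').symm hne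
      omega
  have := key (n+1)
  omega

lemma lagSet_upward (A : Matrix (Fin n) (Fin n) ℝ) (C : Matrix (Fin p) (Fin n) ℝ) (k : ℕ)
    (h : (obsMat A C k).rank = (obsMat A C (k + 1)).rank) :
    (obsMat A C (k+1)).rank = (obsMat A C (k + 2)).rank := by
  rw [rank_eq_iff_obsKer_eq] at h ⊢
  refine le_antisymm ?_ (obsKer_antitone A C (Nat.le_succ _))
  intro v hv
  rw [mem_obsKer]
  intro i hi
  exact obsKer_all h (obsKer_antitone A C (Nat.le_succ k) hv) i

lemma lag_le_iff (A : Matrix (Fin n) (Fin n) ℝ) (C : Matrix (Fin p) (Fin n) ℝ) (k : ℕ) :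
    lag A C ≤ k ↔ (obsMat A C k).rank = (obsMat A C (k + 1)).rank := by
  constructor
  · intro h
    have hmem := Nat.sInf_mem (lagSet_nonempty A C)
    have : ∀ j, lag A C + j ∈ {k | (obsMat A C k).rank = (obsMat A C (k + 1)).rank} := by
      intro j
      induction j with
      | zero => exact hmem
      | succ j ih => exact lagSet_upward A C _ ih
    have := this (k - lag A C)
    rwa [Nat.add_sub_cancel' h] at this
  · intro h
    exact Nat.sInf_le h

lemma append_left' {a b : ℕ} {α : Sort*} (u : Fin a → α) (v : Fin b → α) (i : ℕ)
    (h : i < a) (h2 : i < a + b) : Fin.append u v ⟨i, h2⟩ = u ⟨i, h⟩ := by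
  have : (⟨i, h2⟩ : Fin (a + b)) = Fin.castAdd b ⟨i, h⟩ := rfl
  rw [this, Fin.append_left]

lemma append_right' {a b : ℕ} {α : Sort*} (u : Fin a → α) (v : Fin b → α) (i : ℕ)
    (h : i < b) (h2 : a + i < a + b) : Fin.append u v ⟨a + i, h2⟩ = v ⟨i, h⟩ := by
  have : (⟨a + i, h2⟩ : Fin (a + b)) = Fin.natAdd a ⟨i, h⟩ := rfl
  rw [this, Fin.append_right]

/-- There is a unique future output extending an initial trajectory iff the initial
trajectory is at least as long as the lag. -/
theorem unique_prediction_iff_lag {n m p : ℕ}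
    (A : Matrix (Fin n) (Fin n) ℝ) (B : Matrix (Fin n) (Fin m) ℝ)
    (C : Matrix (Fin p) (Fin n) ℝ) (D : Matrix (Fin p) (Fin m) ℝ)
    (Tini Tf : ℕ) (hTf : 1 ≤ Tf)
    (uini : Fin Tini → Fin m → ℝ) (yini : Fin Tini → Fin p → ℝ)
    (hini : IsTraj A B C D Tini uini yini)
    (uf : Fin Tf → Fin m → ℝ) :
    (∃! yf : Fin Tf → Fin p → ℝ,
        IsTraj A B C D (Tini + Tf) (Fin.append uini uf) (Fin.append yini yf)) ↔
      lag A C ≤ Tini := by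
  set uall : Fin (Tini + Tf) → Fin m → ℝ := Fin.append uini uf with huall
  set uext : ℕ → Fin m → ℝ := fun s => if h : s < Tini + Tf then uall ⟨s, h⟩ else 0 with huext
  have hu : ∀ t : Fin (Tini + Tf), uext ↑t = uall t := by
    intro t
    simp [huext, t.isLt]
  have huini : ∀ t : Fin Tini, uext ↑t = uini t := by
    intro t
    have h2 : (t : ℕ) < Tini + Tf := by omega
    rw [huext]
    simp only [dif_pos h2]
    rw [huall, append_left' uini uf t t.isLt h2, Fin.eta]
  obtain ⟨x0, hx0⟩ := (isTraj_iff A B C D Tini uini yini uext huini).mp hini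
  -- characterization of full trajectories
  have traj_iff' : ∀ yf : Fin Tf → Fin p → ℝ,
      IsTraj A B C D (Tini + Tf) uall (Fin.append yini yf) ↔
      ∃ x0' : Fin n → ℝ,
        (∀ t : Fin Tini, yini t = C.mulVec (stSeq A B uext x0' ↑t) + D.mulVec (uini t)) ∧
        (∀ t : Fin Tf, yf t = C.mulVec (stSeq A B uext x0' (Tini + ↑t)) + D.mulVec (uf t)) := by
    intro yf
    rw [isTraj_iff A B C D _ uall _ uext hu]
    constructor
    · rintro ⟨x0', h⟩
      refine ⟨x0', fun t => ?_, fun t => ?_⟩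
      · have h2 : (t : ℕ) < Tini + Tf := by omega
        have := h ⟨t, h2⟩
        rw [show Fin.append yini yf ⟨(t : ℕ), h2⟩ = yini t by
              rw [append_left' yini yf t t.isLt h2, Fin.eta],
            show uall ⟨(t : ℕ), h2⟩ = uini t by
              rw [huall, append_left' uini uf t t.isLt h2, Fin.eta]] at this
        exact this
      · have h2 : Tini + (t : ℕ) < Tini + Tf := by omega
        have := h ⟨Tini + t, h2⟩
        rw [show Fin.append yini yf ⟨Tini + (t : ℕ), h2⟩ = yf t by
              rw [append_right' yini yf t t.isLt h2, Fin.eta],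
            show uall ⟨Tini + (t : ℕ), h2⟩ = uf t by
              rw [huall, append_right' uini uf t t.isLt h2, Fin.eta]] at this
        exact this
    · rintro ⟨x0', h1, h2⟩
      refine ⟨x0', fun t => ?_⟩
      rcases lt_or_ge (t : ℕ) Tini with ht | ht
      · have he : t = ⟨(t : ℕ), by omega⟩ := by apply Fin.ext; rfl
        rw [he, show Fin.append yini yf ⟨(t : ℕ), t.isLt⟩ = yini ⟨t, ht⟩ from
              append_left' yini yf t ht t.isLt,
            show uall ⟨(t : ℕ), t.isLt⟩ = uini ⟨t, ht⟩ from
              append_left' uini uf t ht t.isLt]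
        exact h1 ⟨t, ht⟩
      · have hs : (t : ℕ) - Tini < Tf := by omega
        have he : t = ⟨Tini + ((t : ℕ) - Tini), by omega⟩ := by apply Fin.ext; simp; omega
        rw [he, show Fin.append yini yf ⟨Tini + ((t : ℕ) - Tini), by omega⟩
              = yf ⟨(t : ℕ) - Tini, hs⟩ from append_right' yini yf _ hs _,
            show uall ⟨Tini + ((t : ℕ) - Tini), by omega⟩
              = uf ⟨(t : ℕ) - Tini, hs⟩ from append_right' uini uf _ hs _]
        exact h2 ⟨(t : ℕ) - Tini, hs⟩
  constructor
  · -- uniqueness implies lag ≤ Tini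
    rintro ⟨yf, hyf, huniq⟩
    by_contra hlag
    rw [lag_le_iff, rank_eq_iff_obsKer_eq] at hlag
    have hne : ¬ obsKer A C Tini ≤ obsKer A C (Tini + 1) := fun hle =>
      hlag (le_antisymm hle (obsKer_antitone A C (Nat.le_add_right _ 1)))
    rw [SetLike.not_le_iff_exists] at hne
    obtain ⟨v, hvK, hvN⟩ := hne
    have hvT : (C * A ^ Tini).mulVec v ≠ 0 := by
      intro h0
      apply hvN
      rw [mem_obsKer]
      intro i hi
      rcases (by omega : i < Tini ∨ i = Tini) with h | h
      · exact mem_obsKer.mp hvK i h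
      · rw [h]; exact h0
    obtain ⟨x0', hc', hf'⟩ := (traj_iff' yf).mp hyf
    set yf2 : Fin Tf → Fin p → ℝ :=
      fun t => C.mulVec (stSeq A B uext (x0' + v) (Tini + ↑t)) + D.mulVec (uf t) with hyf2def
    have hyf2 : IsTraj A B C D (Tini + Tf) uall (Fin.append yini yf2) := by
      refine (traj_iff' yf2).mpr ⟨x0' + v, fun t => ?_, fun t => rfl⟩
      rw [stSeq_add, Matrix.mulVec_add, Matrix.mulVec_mulVec,
        mem_obsKer.mp hvK t t.isLt, add_zero]
      exact hc' t
    have heq : yf2 = yf := huniq yf2 hyf2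
    apply hvT
    have h0 := congrFun heq ⟨0, by omega⟩
    rw [hyf2def] at h0
    simp only at h0
    rw [stSeq_add, Matrix.mulVec_add, Matrix.mulVec_mulVec,
      hf' ⟨0, by omega⟩] at h0
    have h1 : (C * A ^ (Tini + ((⟨0, by omega⟩ : Fin Tf) : ℕ))).mulVec v = 0 := by
      linear_combination h0
    simpa using h1
  · -- lag ≤ Tini implies uniqueness
    intro hlag
    have hK := (rank_eq_iff_obsKer_eq A C Tini).mp ((lag_le_iff A C Tini).mp hlag)
    refine ⟨fun t => C.mulVec (stSeq A B uext x0 (Tini + ↑t)) + D.mulVec (uf t),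
      (traj_iff' _).mpr ⟨x0, hx0, fun t => rfl⟩, ?_⟩
    intro yf hyf
    obtain ⟨x0', hc', hf'⟩ := (traj_iff' yf).mp hyf
    have hst : ∀ t : ℕ, stSeq A B uext x0' t
        = stSeq A B uext x0 t + (A ^ t).mulVec (x0' - x0) := by
      intro t
      have h := stSeq_add A B uext x0 (x0' - x0) t
      rwa [show x0 + (x0' - x0) = x0' by abel] at h
    have hv : x0' - x0 ∈ obsKer A C Tini := by
      rw [mem_obsKer]
      intro i hi
      have e1 := hx0 ⟨i, hi⟩
      have e2 := hc' ⟨i, hi⟩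
      rw [e1] at e2
      rw [hst i, Matrix.mulVec_add, Matrix.mulVec_mulVec] at e2
      linear_combination -e2
    have hall := obsKer_all hK hv
    funext t
    rw [hf' t, hst (Tini + ↑t), Matrix.mulVec_add, Matrix.mulVec_mulVec,
      hall (Tini + ↑t), add_zero]
end

section
/- Let (A,B,C,D) be a linear system and suppose T_ini ≥ ℓ(C,A). If (u, y) and (u, ỹ) are two trajectories of length T_ini + T_f of (A,B,C,D) with the same input u and with y(t) = ỹ(t) for all 0 ≤ t ≤ T_ini−1, then y(t) = ỹ(t) for all 0 ≤ t ≤ T_ini+T_f−1. -/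
/-- Kernel of the observability map of depth `k`, as an intersection of kernels. -/
noncomputable def Kker {n p : ℕ} (A : Matrix (Fin n) (Fin n) ℝ)
    (C : Matrix (Fin p) (Fin n) ℝ) (k : ℕ) : Submodule ℝ (Fin n → ℝ) :=
  ⨅ i : Fin k, LinearMap.ker ((C * A ^ (i : ℕ)).mulVecLin)

lemma mem_Kker {n p : ℕ} {A : Matrix (Fin n) (Fin n) ℝ}
    {C : Matrix (Fin p) (Fin n) ℝ} {k : ℕ} {v : Fin n → ℝ} :
    v ∈ Kker A C k ↔ ∀ i : Fin k, (C * A ^ (i : ℕ)).mulVec v = 0 := by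
  simp [Kker, Submodule.mem_iInf, LinearMap.mem_ker, Matrix.mulVecLin]

lemma ker_obs {n p : ℕ} (A : Matrix (Fin n) (Fin n) ℝ)
    (C : Matrix (Fin p) (Fin n) ℝ) (k : ℕ) :
    LinearMap.ker (obsMat A C k).mulVecLin = Kker A C k := by
  ext v
  rw [mem_Kker, LinearMap.mem_ker]
  constructor
  · intro h i
    funext r
    have := congrFun h (i, r)
    simpa [obsMat, Matrix.mulVecLin, Matrix.mulVec, dotProduct] using this
  · intro h
    funext ir
    have := congrFun (h ir.1) ir.2
    simpa [obsMat, Matrix.mulVecLin, Matrix.mulVec, dotProduct] using this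

lemma rank_add_finrank {n p : ℕ} (A : Matrix (Fin n) (Fin n) ℝ)
    (C : Matrix (Fin p) (Fin n) ℝ) (k : ℕ) :
    (obsMat A C k).rank + Module.finrank ℝ (Kker A C k) = n := by
  have := LinearMap.finrank_range_add_finrank_ker (obsMat A C k).mulVecLin
  rw [ker_obs] at this
  simpa [Matrix.rank] using this

lemma Kker_anti {n p : ℕ} (A : Matrix (Fin n) (Fin n) ℝ)
    (C : Matrix (Fin p) (Fin n) ℝ) {j k : ℕ} (h : j ≤ k) :
    Kker A C k ≤ Kker A C j := by
  intro v hv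
  rw [mem_Kker] at hv ⊢
  intro i
  exact hv ⟨i, lt_of_lt_of_le i.2 h⟩

lemma Kker_step {n p : ℕ} (A : Matrix (Fin n) (Fin n) ℝ)
    (C : Matrix (Fin p) (Fin n) ℝ) {k : ℕ}
    (h : Kker A C k = Kker A C (k + 1)) :
    Kker A C (k + 1) = Kker A C (k + 2) := by
  refine le_antisymm ?_ (Kker_anti A C (by omega))
  intro v hv
  rw [mem_Kker] at hv ⊢
  intro i
  rcases lt_or_eq_of_le (Nat.lt_succ_iff.mp i.2) with hi | hi
  · exact hv ⟨i, hi⟩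
  · have hAv : A.mulVec v ∈ Kker A C k := by
      rw [mem_Kker]
      intro r
      have := hv ⟨(r : ℕ) + 1, by omega⟩
      rw [Matrix.mulVec_mulVec, Matrix.mul_assoc, ← pow_succ]
      simpa using this
    rw [h, mem_Kker] at hAv
    have := hAv ⟨k, by omega⟩
    rw [hi, pow_succ, ← Matrix.mul_assoc, ← Matrix.mulVec_mulVec]
    simpa using this

lemma Kker_stab' {n p : ℕ} (A : Matrix (Fin n) (Fin n) ℝ)
    (C : Matrix (Fin p) (Fin n) ℝ) {l : ℕ}
    (h : Kker A C l = Kker A C (l + 1)) :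
    ∀ d, Kker A C (l + d) = Kker A C (l + d + 1) := by
  intro d
  induction d with
  | zero => exact h
  | succ d ih => exact Kker_step A C ih

lemma Kker_stab {n p : ℕ} (A : Matrix (Fin n) (Fin n) ℝ)
    (C : Matrix (Fin p) (Fin n) ℝ) {l : ℕ}
    (h : Kker A C l = Kker A C (l + 1)) :
    ∀ k, l ≤ k → Kker A C k = Kker A C l := by
  intro k hk
  obtain ⟨d, rfl⟩ := Nat.exists_eq_add_of_le hk
  induction d with
  | zero => rfl
  | succ d ih =>
    have : l + (d + 1) = l + d + 1 := by omega
    rw [this, ← Kker_stab' A C h d, ih (by omega)]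

/-- The kernel filtration stabilizes at some index. -/
lemma Kker_exists_stab {n p : ℕ} (A : Matrix (Fin n) (Fin n) ℝ)
    (C : Matrix (Fin p) (Fin n) ℝ) :
    ∃ k, Kker A C k = Kker A C (k + 1) := by
  by_contra hcon
  push_neg at hcon
  have hlt : ∀ k, Module.finrank ℝ (Kker A C (k + 1)) < Module.finrank ℝ (Kker A C k) := by
    intro k
    have hle : Kker A C (k + 1) ≤ Kker A C k := Kker_anti A C (by omega)
    rcases lt_or_eq_of_le (Submodule.finrank_mono hle) with h | h
    · exact h
    · exact absurd (Submodule.eq_of_le_of_finrank_eq hle h).symm (hcon k)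
  have hbound : ∀ k, Module.finrank ℝ (Kker A C k) + k ≤ Module.finrank ℝ (Kker A C 0) := by
    intro k
    induction k with
    | zero => omega
    | succ k ih => have := hlt k; omega
  have := hbound (Module.finrank ℝ (Kker A C 0) + 1)
  omega

lemma Kker_lag {n p : ℕ} (A : Matrix (Fin n) (Fin n) ℝ)
    (C : Matrix (Fin p) (Fin n) ℝ) :
    Kker A C (lag A C) = Kker A C (lag A C + 1) := by
  obtain ⟨k, hk⟩ := Kker_exists_stab A C
  have hne : {j | (obsMat A C j).rank = (obsMat A C (j + 1)).rank}.Nonempty := by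
    refine ⟨k, show (obsMat A C k).rank = (obsMat A C (k + 1)).rank from ?_⟩
    have h1 := rank_add_finrank A C k
    have h2 := rank_add_finrank A C (k + 1)
    rw [hk] at h1
    omega
  have hmem := Nat.sInf_mem hne
  have h1 := rank_add_finrank A C (lag A C)
  have h2 := rank_add_finrank A C (lag A C + 1)
  have hfr : Module.finrank ℝ (Kker A C (lag A C + 1))
      = Module.finrank ℝ (Kker A C (lag A C)) := by
    have h3 : (obsMat A C (lag A C)).rank = (obsMat A C (lag A C + 1)).rank := hmem
    omega
  exact (Submodule.eq_of_le_of_finrank_eq (Kker_anti A C (by omega)) hfr).symm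

set_option maxHeartbeats 2000000 in
/-- If two trajectories of the same system share the input and agree on the first
`Tini ≥ ℓ(C,A)` outputs, they agree everywhere. -/
theorem outputs_agree_of_agree_on_lag {n m p : ℕ}
    (A : Matrix (Fin n) (Fin n) ℝ) (B : Matrix (Fin n) (Fin m) ℝ)
    (C : Matrix (Fin p) (Fin n) ℝ) (D : Matrix (Fin p) (Fin m) ℝ)
    (Tini Tf : ℕ) (hTini : lag A C ≤ Tini)
    (u : Fin (Tini + Tf) → Fin m → ℝ)
    (y ytilde : Fin (Tini + Tf) → Fin p → ℝ)
    (hy : IsTraj A B C D (Tini + Tf) u y)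
    (hytilde : IsTraj A B C D (Tini + Tf) u ytilde)
    (hpre : ∀ t : Fin (Tini + Tf), (t : ℕ) < Tini → y t = ytilde t) :
    ∀ t : Fin (Tini + Tf), y t = ytilde t := by
  obtain ⟨x, hx⟩ := hy
  obtain ⟨xt, hxt⟩ := hytilde
  have hstate : ∀ k (hk : k ≤ Tini + Tf),
      x ⟨k, by omega⟩ - xt ⟨k, by omega⟩ = (A ^ k).mulVec (x 0 - xt 0) := by
    intro k
    induction k with
    | zero =>
      intro _
      rw [Fin.mk_zero, pow_zero, Matrix.one_mulVec]
    | succ k ih =>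
      intro hk
      have hkT : k < Tini + Tf := by omega
      have h1 := (hx ⟨k, hkT⟩).1
      have h2 := (hxt ⟨k, hkT⟩).1
      have hsucc : (⟨k, hkT⟩ : Fin (Tini + Tf)).succ = (⟨k + 1, by omega⟩ : Fin (Tini + Tf + 1)) := rfl
      have hcast : (⟨k, hkT⟩ : Fin (Tini + Tf)).castSucc = (⟨k, by omega⟩ : Fin (Tini + Tf + 1)) := rfl
      rw [hsucc, hcast] at h1 h2
      rw [h1, h2]
      have heq : A.mulVec (x ⟨k, by omega⟩) + B.mulVec (u ⟨k, hkT⟩)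
          - (A.mulVec (xt ⟨k, by omega⟩) + B.mulVec (u ⟨k, hkT⟩))
          = A.mulVec (x ⟨k, by omega⟩ - xt ⟨k, by omega⟩) := by
        rw [Matrix.mulVec_sub]
        abel
      rw [heq, ih (by omega), Matrix.mulVec_mulVec, ← pow_succ']
  have hout : ∀ t : Fin (Tini + Tf), y t - ytilde t = (C * A ^ (t : ℕ)).mulVec (x 0 - xt 0) := by
    intro t
    have h1 := (hx t).2
    have h2 := (hxt t).2
    have hcast : t.castSucc = (⟨(t : ℕ), by omega⟩ : Fin (Tini + Tf + 1)) := rfl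
    rw [hcast] at h1 h2
    rw [h1, h2]
    have heq : C.mulVec (x ⟨(t : ℕ), by omega⟩) + D.mulVec (u t)
        - (C.mulVec (xt ⟨(t : ℕ), by omega⟩) + D.mulVec (u t))
        = C.mulVec (x ⟨(t : ℕ), by omega⟩ - xt ⟨(t : ℕ), by omega⟩) := by
      rw [Matrix.mulVec_sub]
      abel
    rw [heq, hstate (t : ℕ) (by omega), Matrix.mulVec_mulVec]
  have hmem : x 0 - xt 0 ∈ Kker A C Tini := by
    rw [mem_Kker]
    intro i
    have hiT : (i : ℕ) < Tini + Tf := by omega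
    have h := hout ⟨(i : ℕ), hiT⟩
    rw [hpre ⟨(i : ℕ), hiT⟩ i.2, sub_self] at h
    simpa using h.symm
  have hmeml : x 0 - xt 0 ∈ Kker A C (lag A C) := by
    rw [← Kker_stab A C (Kker_lag A C) Tini hTini]
    exact hmem
  have hall : ∀ j, x 0 - xt 0 ∈ Kker A C j := by
    intro j
    rcases le_or_gt j (lag A C) with hj | hj
    · exact Kker_anti A C hj hmeml
    · rw [Kker_stab A C (Kker_lag A C) j (le_of_lt hj)]
      exact hmeml
  intro t
  have h := hout t
  have hz : (C * A ^ (t : ℕ)).mulVec (x 0 - xt 0) = 0 := by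
    have := mem_Kker.mp (hall ((t : ℕ) + 1)) ⟨(t : ℕ), by omega⟩
    simpa using this
  rw [hz] at h
  exact sub_eq_zero.mp h
end

section
/- Fix m, p, L, N ∈ ℕ, a data pair (u_d, y_d) of length T, an initial pair (u_ini, y_ini) of length T_ini, and a future input u_f : {0,…,T_f−1} → ℝ^m with T_f ≥ 1. If (u_d, y_d) is informative for unique prediction of u_f from (u_ini, y_ini), then T_ini ≥ ℓ(C',A') for every explaining system (n', A', B', C', D'). -/
/-- `(n', A', B', C', D')` is an explaining system for the data `(ud, yd)` and the
initial trajectory `(uini, yini)`, within the model class of order at most `N` and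
lag at most `L`. -/
def Explaining {m p : ℕ} (L N T Tini : ℕ)
    (ud : Fin T → Fin m → ℝ) (yd : Fin T → Fin p → ℝ)
    (uini : Fin Tini → Fin m → ℝ) (yini : Fin Tini → Fin p → ℝ)
    {n' : ℕ} (A' : Matrix (Fin n') (Fin n') ℝ) (B' : Matrix (Fin n') (Fin m) ℝ)
    (C' : Matrix (Fin p) (Fin n') ℝ) (D' : Matrix (Fin p) (Fin m) ℝ) : Prop :=
  n' ≤ N ∧ lag A' C' ≤ L ∧ IsTraj A' B' C' D' T ud yd ∧ IsTraj A' B' C' D' Tini uini yini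

/-- The data `(ud, yd)` is informative for unique prediction of `uf` from
`(uini, yini)`: (i) every explaining system has exactly one response `yf` to `uf`
extending `(uini, yini)`, and (ii) some `yf` works for all explaining systems. -/
def Informative {m p : ℕ} (L N T Tini Tf : ℕ)
    (ud : Fin T → Fin m → ℝ) (yd : Fin T → Fin p → ℝ)
    (uini : Fin Tini → Fin m → ℝ) (yini : Fin Tini → Fin p → ℝ)
    (uf : Fin Tf → Fin m → ℝ) : Prop :=
  (∀ (n' : ℕ) (A' : Matrix (Fin n') (Fin n') ℝ) (B' : Matrix (Fin n') (Fin m) ℝ)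
      (C' : Matrix (Fin p) (Fin n') ℝ) (D' : Matrix (Fin p) (Fin m) ℝ),
      Explaining L N T Tini ud yd uini yini A' B' C' D' →
      ∃! yf : Fin Tf → Fin p → ℝ,
        IsTraj A' B' C' D' (Tini + Tf) (Fin.append uini uf) (Fin.append yini yf)) ∧
  (∃ yf : Fin Tf → Fin p → ℝ,
      ∀ (n' : ℕ) (A' : Matrix (Fin n') (Fin n') ℝ) (B' : Matrix (Fin n') (Fin m) ℝ)
        (C' : Matrix (Fin p) (Fin n') ℝ) (D' : Matrix (Fin p) (Fin m) ℝ),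
        Explaining L N T Tini ud yd uini yini A' B' C' D' →
        IsTraj A' B' C' D' (Tini + Tf) (Fin.append uini uf) (Fin.append yini yf))

/-!
If `z` lies in the kernel of `O_Tini`, the initial states `x(0)` and `x(0) + z` produce the same
initial output `yini`, so by linearity the free response `t ↦ C A^t z` can be added to any
continuation of `(uini, yini)` without changing its first `Tini` outputs. Uniqueness of the
predicted `yf` then forces `C A^Tini z = 0`, i.e. `ker O_Tini = ker O_{Tini+1}`, so the ranks
agree and the lag is at most `Tini`.
-/

open Matrix

theorem Matrix.rank_eq_of_ker_mulVecLin_eq {K : Type*} [Field K] {m m' n : Type*} [Fintype n]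
    {M : Matrix m n K} {M' : Matrix m' n K}
    (h : LinearMap.ker M.mulVecLin = LinearMap.ker M'.mulVecLin) : M.rank = M'.rank := by
  have hM := LinearMap.finrank_range_add_finrank_ker M.mulVecLin
  have hM' := LinearMap.finrank_range_add_finrank_ker M'.mulVecLin
  rw [h] at hM
  unfold Matrix.rank
  omega

section

variable {n m p : ℕ} {A : Matrix (Fin n) (Fin n) ℝ} {B : Matrix (Fin n) (Fin m) ℝ}
  {C : Matrix (Fin p) (Fin n) ℝ} {D : Matrix (Fin p) (Fin m) ℝ}

theorem obsMat_mulVec_eq_zero_iff {k : ℕ} {z : Fin n → ℝ} :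
    obsMat A C k *ᵥ z = 0 ↔ ∀ i : Fin k, C *ᵥ (A ^ (i : ℕ) *ᵥ z) = 0 := by
  simp only [mulVec_mulVec, funext_iff, Prod.forall, Pi.zero_apply]
  rfl

theorem lag_le_of_unobservable {k : ℕ}
    (h : ∀ z : Fin n → ℝ, (∀ i : Fin k, C *ᵥ (A ^ (i : ℕ) *ᵥ z) = 0) →
      C *ᵥ (A ^ k *ᵥ z) = 0) :
    lag A C ≤ k := by
  refine Nat.sInf_le (Eq.symm (rank_eq_of_ker_mulVecLin_eq ?_))
  ext z
  simp only [LinearMap.mem_ker, mulVecLin_apply, obsMat_mulVec_eq_zero_iff,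
    Fin.forall_fin_succ', Fin.val_castSucc, Fin.val_last]
  exact ⟨And.left, fun hz => ⟨hz, h z hz⟩⟩

theorem IsTraj.add_free_response {T : ℕ} {u : Fin T → Fin m → ℝ} {y : Fin T → Fin p → ℝ}
    (hy : IsTraj A B C D T u y) (z : Fin n → ℝ) :
    IsTraj A B C D T u fun t => y t + C *ᵥ (A ^ (t : ℕ) *ᵥ z) := by
  obtain ⟨x, hx⟩ := hy
  refine ⟨fun t => x t + A ^ (t : ℕ) *ᵥ z, fun t => ⟨?_, ?_⟩⟩
  · simp only [(hx t).1, Fin.val_succ, Fin.val_castSucc, pow_succ', ← mulVec_mulVec,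
      mulVec_add]
    abel
  · simp only [(hx t).2, Fin.val_castSucc, mulVec_add]
    abel

theorem IsTraj.append_add_free_response {k l : ℕ} {u : Fin (k + l) → Fin m → ℝ}
    {y : Fin k → Fin p → ℝ} {yf : Fin l → Fin p → ℝ} {z : Fin n → ℝ}
    (hy : IsTraj A B C D (k + l) u (Fin.append y yf))
    (hz : ∀ i : Fin k, C *ᵥ (A ^ (i : ℕ) *ᵥ z) = 0) :
    IsTraj A B C D (k + l) u (Fin.append y fun s => yf s + C *ᵥ (A ^ (k + s : ℕ) *ᵥ z)) := by
  convert hy.add_free_response z using 1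
  funext t
  refine Fin.addCases (fun i => ?_) (fun s => ?_) t
  · simp [hz]
  · simp

theorem unobservable_succ_of_existsUnique_continuation {k l : ℕ} (hl : 0 < l)
    {u : Fin (k + l) → Fin m → ℝ} {y : Fin k → Fin p → ℝ}
    (huniq : ∃! yf : Fin l → Fin p → ℝ, IsTraj A B C D (k + l) u (Fin.append y yf))
    {z : Fin n → ℝ} (hz : ∀ i : Fin k, C *ᵥ (A ^ (i : ℕ) *ᵥ z) = 0) :
    C *ᵥ (A ^ k *ᵥ z) = 0 := by
  obtain ⟨yf, hyf, huniq⟩ := huniq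
  have hshift := congrFun (huniq _ (hyf.append_add_free_response hz)) ⟨0, hl⟩
  simpa using hshift

end

/-- If the data is informative for unique prediction, then `Tini` is at least the lag of
every explaining system. -/
theorem Tini_ge_lag_of_informative {m p : ℕ} (L N T Tini Tf : ℕ) (hTf : 1 ≤ Tf)
    (ud : Fin T → Fin m → ℝ) (yd : Fin T → Fin p → ℝ)
    (uini : Fin Tini → Fin m → ℝ) (yini : Fin Tini → Fin p → ℝ)
    (uf : Fin Tf → Fin m → ℝ)
    (h : Informative L N T Tini Tf ud yd uini yini uf) :
    ∀ (n' : ℕ) (A' : Matrix (Fin n') (Fin n') ℝ) (B' : Matrix (Fin n') (Fin m) ℝ)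
      (C' : Matrix (Fin p) (Fin n') ℝ) (D' : Matrix (Fin p) (Fin m) ℝ),
      Explaining L N T Tini ud yd uini yini A' B' C' D' → lag A' C' ≤ Tini := by
  intro n' A' B' C' D' hexp
  exact lag_le_of_unobservable fun z hz =>
    unobservable_succ_of_existsUnique_continuation hTf (h.1 n' A' B' C' D' hexp) hz
end

section
/- Fix m, p, L, N ∈ ℕ, a data pair (u_d, y_d) of length T, an initial pair (u_ini, y_ini) of length T_ini, and a future input u_f : {0,…,T_f−1} → ℝ^m with T_f ≥ 1. Then (u_d, y_d) is informative for unique prediction of u_f from (u_ini, y_ini) if and only if both of the following hold: (i) T_ini ≥ ℓ(C',A') for every explaining system (n', A', B', C', D'), and (ii) there exists y_f : {0,…,T_f−1} → ℝ^p such that (u_ini·u_f, y_ini·y_f) is a trajectory of length T_ini+T_f of every explaining system. -/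
namespace InfoPredAux

open Matrix Module

variable {nn m p : ℕ}

/-- Kernel condition for the depth-`k` observability matrix. -/
def Ker0 (A : Matrix (Fin nn) (Fin nn) ℝ) (C : Matrix (Fin p) (Fin nn) ℝ)
    (k : ℕ) (z : Fin nn → ℝ) : Prop :=
  ∀ i : ℕ, i < k → C.mulVec ((A ^ i).mulVec z) = 0

lemma pow_mulVec_A (A : Matrix (Fin nn) (Fin nn) ℝ) (i : ℕ) (z : Fin nn → ℝ) :
    (A ^ i).mulVec (A.mulVec z) = (A ^ (i + 1)).mulVec z := by
  rw [Matrix.mulVec_mulVec, ← pow_succ]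

lemma A_mulVec_pow (A : Matrix (Fin nn) (Fin nn) ℝ) (i : ℕ) (z : Fin nn → ℝ) :
    A.mulVec ((A ^ i).mulVec z) = (A ^ (i + 1)).mulVec z := by
  rw [Matrix.mulVec_mulVec, ← pow_succ']

lemma obs_mulVec_eq_zero_iff (A : Matrix (Fin nn) (Fin nn) ℝ) (C : Matrix (Fin p) (Fin nn) ℝ)
    (k : ℕ) (z : Fin nn → ℝ) :
    (obsMat A C k).mulVec z = 0 ↔ Ker0 A C k z := by
  have key : ∀ (i : Fin k) (r : Fin p),
      (obsMat A C k).mulVec z (i, r) = C.mulVec ((A ^ (i : ℕ)).mulVec z) r := by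
    intro i r
    rw [Matrix.mulVec_mulVec]
    rfl
  constructor
  · intro h i hi
    funext r
    have := congrFun h (⟨i, hi⟩, r)
    rw [key ⟨i, hi⟩ r] at this
    simpa using this
  · intro h
    funext ir
    obtain ⟨i, r⟩ := ir
    rw [key i r, h i i.isLt]
    rfl

lemma mem_ker_obs_iff (A : Matrix (Fin nn) (Fin nn) ℝ) (C : Matrix (Fin p) (Fin nn) ℝ)
    (k : ℕ) (z : Fin nn → ℝ) :
    z ∈ LinearMap.ker (obsMat A C k).mulVecLin ↔ Ker0 A C k z := by
  rw [LinearMap.mem_ker, Matrix.mulVecLin_apply, obs_mulVec_eq_zero_iff]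

lemma ker_obs_le (A : Matrix (Fin nn) (Fin nn) ℝ) (C : Matrix (Fin p) (Fin nn) ℝ) (k : ℕ) :
    LinearMap.ker (obsMat A C (k + 1)).mulVecLin ≤ LinearMap.ker (obsMat A C k).mulVecLin := by
  intro z hz
  rw [mem_ker_obs_iff] at hz ⊢
  exact fun i hi => hz i (by omega)

lemma rank_add_finrank_ker (A : Matrix (Fin nn) (Fin nn) ℝ) (C : Matrix (Fin p) (Fin nn) ℝ)
    (k : ℕ) :
    (obsMat A C k).rank + finrank ℝ (LinearMap.ker (obsMat A C k).mulVecLin) = nn := by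
  have h := LinearMap.finrank_range_add_finrank_ker (obsMat A C k).mulVecLin
  rw [Module.finrank_fin_fun] at h
  exact h

lemma rank_eq_iff (A : Matrix (Fin nn) (Fin nn) ℝ) (C : Matrix (Fin p) (Fin nn) ℝ) (k : ℕ) :
    (obsMat A C k).rank = (obsMat A C (k + 1)).rank ↔
      ∀ z, Ker0 A C k z → Ker0 A C (k + 1) z := by
  have h1 := rank_add_finrank_ker A C k
  have h2 := rank_add_finrank_ker A C (k + 1)
  constructor
  · intro hr z hz
    have hfr : finrank ℝ (LinearMap.ker (obsMat A C (k+1)).mulVecLin)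
        = finrank ℝ (LinearMap.ker (obsMat A C k).mulVecLin) := by omega
    have heq := Submodule.eq_of_le_of_finrank_eq (ker_obs_le A C k) hfr
    rw [← mem_ker_obs_iff, heq, mem_ker_obs_iff]
    exact hz
  · intro h
    have heq : LinearMap.ker (obsMat A C (k+1)).mulVecLin
        = LinearMap.ker (obsMat A C k).mulVecLin := by
      refine le_antisymm (ker_obs_le A C k) ?_
      intro z hz
      rw [mem_ker_obs_iff] at hz ⊢
      exact h z hz
    have : finrank ℝ (LinearMap.ker (obsMat A C (k+1)).mulVecLin)
        = finrank ℝ (LinearMap.ker (obsMat A C k).mulVecLin) := by rw [heq]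
    omega

lemma rank_obs_mono (A : Matrix (Fin nn) (Fin nn) ℝ) (C : Matrix (Fin p) (Fin nn) ℝ) (k : ℕ) :
    (obsMat A C k).rank ≤ (obsMat A C (k + 1)).rank := by
  have h1 := rank_add_finrank_ker A C k
  have h2 := rank_add_finrank_ker A C (k + 1)
  have := Submodule.finrank_mono (ker_obs_le A C k)
  omega

lemma lagSet_nonempty (A : Matrix (Fin nn) (Fin nn) ℝ) (C : Matrix (Fin p) (Fin nn) ℝ) :
    {k | (obsMat A C k).rank = (obsMat A C (k + 1)).rank}.Nonempty := by
  by_contra h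
  rw [Set.not_nonempty_iff_eq_empty] at h
  have hlt : ∀ k, (obsMat A C k).rank < (obsMat A C (k + 1)).rank := by
    intro k
    refine lt_of_le_of_ne (rank_obs_mono A C k) ?_
    intro he
    have hmem : k ∈ {k | (obsMat A C k).rank = (obsMat A C (k + 1)).rank} := he
    rw [h] at hmem
    exact hmem
  have hge : ∀ k, k ≤ (obsMat A C k).rank := by
    intro k
    induction k with
    | zero => omega
    | succ k ih => have := hlt k; omega
  have := hge (nn + 1)
  have hle := Matrix.rank_le_card_width (obsMat A C (nn + 1))
  simp at hle
  omega

lemma mem_lagSet_succ (A : Matrix (Fin nn) (Fin nn) ℝ) (C : Matrix (Fin p) (Fin nn) ℝ) (k : ℕ)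
    (hk : (obsMat A C k).rank = (obsMat A C (k + 1)).rank) :
    (obsMat A C (k + 1)).rank = (obsMat A C (k + 2)).rank := by
  rw [rank_eq_iff] at hk ⊢
  intro z hz i hi
  rcases Nat.lt_or_ge i (k + 1) with h | h
  · exact hz i h
  · have hi2 : i = k + 1 := by omega
    subst hi2
    have hAz : Ker0 A C k (A.mulVec z) := by
      intro j hj
      rw [pow_mulVec_A]
      exact hz (j + 1) (by omega)
    have := hk (A.mulVec z) hAz k (by omega)
    rwa [pow_mulVec_A] at this

lemma rank_eq_of_lag_le (A : Matrix (Fin nn) (Fin nn) ℝ) (C : Matrix (Fin p) (Fin nn) ℝ)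
    {k : ℕ} (h : lag A C ≤ k) :
    (obsMat A C k).rank = (obsMat A C (k + 1)).rank := by
  have hmem : lag A C ∈ {k | (obsMat A C k).rank = (obsMat A C (k + 1)).rank} :=
    Nat.sInf_mem (lagSet_nonempty A C)
  have step : ∀ j, (obsMat A C (lag A C + j)).rank = (obsMat A C (lag A C + j + 1)).rank := by
    intro j
    induction j with
    | zero => exact hmem
    | succ j ih => exact mem_lagSet_succ A C _ ih
  have := step (k - lag A C)
  have he : lag A C + (k - lag A C) = k := by omega
  rw [he] at this
  exact this

lemma stab (A : Matrix (Fin nn) (Fin nn) ℝ) (C : Matrix (Fin p) (Fin nn) ℝ)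
    {k : ℕ} (h : lag A C ≤ k) :
    ∀ z, Ker0 A C k z → ∀ j, C.mulVec ((A ^ j).mulVec z) = 0 := by
  have H := (rank_eq_iff A C k).mp (rank_eq_of_lag_le A C h)
  have hAstep : ∀ z, Ker0 A C k z → Ker0 A C k (A.mulVec z) := by
    intro z hz i hi
    rw [pow_mulVec_A]
    exact H z hz (i + 1) (by omega)
  have key : ∀ j z, Ker0 A C k z → C.mulVec ((A ^ (k + j)).mulVec z) = 0 := by
    intro j
    induction j with
    | zero => intro z hz; exact H z hz k (by omega)
    | succ j ih =>
      intro z hz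
      have : (A ^ (k + (j + 1))).mulVec z = (A ^ (k + j)).mulVec (A.mulVec z) := by
        rw [pow_mulVec_A]
        ring_nf
      rw [this]
      exact ih (A.mulVec z) (hAstep z hz)
  intro z hz j
  rcases Nat.lt_or_ge j k with hj | hj
  · exact hz j hj
  · have := key (j - k) z hz
    have he : k + (j - k) = j := by omega
    rw [he] at this
    exact this

/-- State sequence driven by input `U` from initial state `x0`. -/
noncomputable def stSeq (A : Matrix (Fin nn) (Fin nn) ℝ) (B : Matrix (Fin nn) (Fin m) ℝ)
    (U : ℕ → Fin m → ℝ) (x0 : Fin nn → ℝ) : ℕ → Fin nn → ℝ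
  | 0 => x0
  | t + 1 => A.mulVec (stSeq A B U x0 t) + B.mulVec (U t)

lemma extend_lemma (A : Matrix (Fin nn) (Fin nn) ℝ) (B : Matrix (Fin nn) (Fin m) ℝ)
    (C : Matrix (Fin p) (Fin nn) ℝ) (D : Matrix (Fin p) (Fin m) ℝ) {Tini Tf : ℕ}
    (uini : Fin Tini → Fin m → ℝ) (yini : Fin Tini → Fin p → ℝ) (uf : Fin Tf → Fin m → ℝ)
    (hini : IsTraj A B C D Tini uini yini) :
    ∃ w : Fin Tf → Fin p → ℝ, ∀ z : Fin nn → ℝ, Ker0 A C Tini z →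
      IsTraj A B C D (Tini + Tf) (Fin.append uini uf)
        (Fin.append yini (fun t => w t + C.mulVec ((A ^ (Tini + (t : ℕ))).mulVec z))) := by
  obtain ⟨x, hx⟩ := hini
  set U : ℕ → Fin m → ℝ :=
    fun t => if h : t < Tini + Tf then Fin.append uini uf ⟨t, h⟩ else 0 with hU
  set X : ℕ → Fin nn → ℝ := stSeq A B U (x 0) with hX
  have hXx : ∀ t, ∀ ht : t ≤ Tini, X t = x ⟨t, by omega⟩ := by
    intro t
    induction t with
    | zero =>
      intro _
      show x 0 = _
      congr 1
    | succ t ih =>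
      intro ht
      have htT : t < Tini := by omega
      have hdyn := (hx ⟨t, htT⟩).1
      show A.mulVec (X t) + B.mulVec (U t) = _
      rw [ih (by omega)]
      have hUt : U t = uini ⟨t, htT⟩ := by
        have h1 : t < Tini + Tf := by omega
        rw [hU]
        simp only [dif_pos h1]
        have he : (⟨t, h1⟩ : Fin (Tini + Tf)) = Fin.castAdd Tf ⟨t, htT⟩ := rfl
        rw [he, Fin.append_left]
      rw [hUt]
      rw [Fin.succ_mk, Fin.castSucc_mk] at hdyn
      exact hdyn.symm
  refine ⟨fun t => C.mulVec (X (Tini + (t : ℕ))) + D.mulVec (uf t), ?_⟩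
  intro z hz
  refine ⟨fun s => X (s : ℕ) + (A ^ (s : ℕ)).mulVec z, ?_⟩
  intro t
  constructor
  · show X ((t.succ : ℕ)) + _ = _
    simp only [Fin.val_succ, Fin.coe_castSucc]
    show A.mulVec (X (t : ℕ)) + B.mulVec (U (t : ℕ)) + _ = _
    have hUt : U (t : ℕ) = Fin.append uini uf t := by
      rw [hU]
      simp only [dif_pos t.isLt, Fin.eta]
    rw [hUt, Matrix.mulVec_add, A_mulVec_pow]
    abel
  · simp only [Fin.coe_castSucc]
    rcases Nat.lt_or_ge (t : ℕ) Tini with h | h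
    · have he : t = Fin.castAdd Tf ⟨(t : ℕ), h⟩ := Fin.ext rfl
      rw [he, Fin.append_left, Fin.append_left]
      rw [Fin.castAdd_mk]
      rw [hXx (t : ℕ) (by omega)]
      rw [Matrix.mulVec_add, hz (t : ℕ) h]
      have hout := (hx ⟨(t : ℕ), h⟩).2
      rw [Fin.castSucc_mk] at hout
      rw [hout]
      abel
    · have hs : (t : ℕ) - Tini < Tf := by omega
      have he : t = Fin.natAdd Tini ⟨(t : ℕ) - Tini, hs⟩ := Fin.ext (by simp; omega)
      rw [he, Fin.append_right, Fin.append_right]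
      simp only [Fin.natAdd_mk]
      have hval : Tini + ((t : ℕ) - Tini) = (t : ℕ) := by omega
      rw [Matrix.mulVec_add]
      abel
  
lemma uniq_lemma (A : Matrix (Fin nn) (Fin nn) ℝ) (B : Matrix (Fin nn) (Fin m) ℝ)
    (C : Matrix (Fin p) (Fin nn) ℝ) (D : Matrix (Fin p) (Fin m) ℝ) {Tini Tf : ℕ}
    (U : Fin (Tini + Tf) → Fin m → ℝ) (yini : Fin Tini → Fin p → ℝ)
    (yf yf' : Fin Tf → Fin p → ℝ)
    (hstab : ∀ z, Ker0 A C Tini z → ∀ j, C.mulVec ((A ^ j).mulVec z) = 0)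
    (h1 : IsTraj A B C D (Tini + Tf) U (Fin.append yini yf))
    (h2 : IsTraj A B C D (Tini + Tf) U (Fin.append yini yf')) : yf = yf' := by
  obtain ⟨x, hx⟩ := h1
  obtain ⟨x', hx'⟩ := h2
  set z : Fin nn → ℝ := x 0 - x' 0 with hzdef
  have hdiff : ∀ t, ∀ ht : t ≤ Tini + Tf,
      x ⟨t, by omega⟩ - x' ⟨t, by omega⟩ = (A ^ t).mulVec z := by
    intro t
    induction t with
    | zero =>
      intro _
      have h0 : (⟨0, by omega⟩ : Fin (Tini + Tf + 1)) = 0 := rfl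
      rw [h0, pow_zero, Matrix.one_mulVec]
    | succ t ih =>
      intro ht
      have htT : t < Tini + Tf := by omega
      have d1 := (hx ⟨t, htT⟩).1
      have d2 := (hx' ⟨t, htT⟩).1
      rw [Fin.succ_mk, Fin.castSucc_mk] at d1 d2
      rw [d1, d2]
      have : A.mulVec (x ⟨t, by omega⟩) + B.mulVec (U ⟨t, htT⟩)
          - (A.mulVec (x' ⟨t, by omega⟩) + B.mulVec (U ⟨t, htT⟩))
          = A.mulVec (x ⟨t, by omega⟩ - x' ⟨t, by omega⟩) := by
        rw [Matrix.mulVec_sub]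
        abel
      rw [this, ih (by omega), A_mulVec_pow]
  have hout : ∀ t : Fin (Tini + Tf),
      Fin.append yini yf t - Fin.append yini yf' t = C.mulVec ((A ^ (t : ℕ)).mulVec z) := by
    intro t
    rw [(hx t).2, (hx' t).2]
    have hc : t.castSucc = (⟨(t : ℕ), by omega⟩ : Fin (Tini + Tf + 1)) := Fin.ext rfl
    rw [hc]
    rw [← hdiff (t : ℕ) (by omega), Matrix.mulVec_sub]
    abel
  have hker : Ker0 A C Tini z := by
    intro i hi
    have := hout (Fin.castAdd Tf ⟨i, hi⟩)
    rw [Fin.append_left, Fin.append_left, sub_self] at this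
    have hv : ((Fin.castAdd Tf ⟨i, hi⟩ : Fin (Tini + Tf)) : ℕ) = i := rfl
    rw [hv] at this
    exact this.symm
  funext t
  have := hout (Fin.natAdd Tini t)
  rw [Fin.append_right, Fin.append_right] at this
  have hv : ((Fin.natAdd Tini t : Fin (Tini + Tf)) : ℕ) = Tini + (t : ℕ) := rfl
  rw [hv, hstab z hker (Tini + (t : ℕ))] at this
  exact sub_eq_zero.mp this

end InfoPredAux

/-- Informativity for unique prediction is equivalent to: `Tini` dominates the lag of
every explaining system, and some `yf` is a valid response for all explaining systems. -/
theorem informative_iff {m p : ℕ} (L N T Tini Tf : ℕ) (hTf : 1 ≤ Tf)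
    (ud : Fin T → Fin m → ℝ) (yd : Fin T → Fin p → ℝ)
    (uini : Fin Tini → Fin m → ℝ) (yini : Fin Tini → Fin p → ℝ)
    (uf : Fin Tf → Fin m → ℝ) :
    Informative L N T Tini Tf ud yd uini yini uf ↔
      ((∀ (n' : ℕ) (A' : Matrix (Fin n') (Fin n') ℝ) (B' : Matrix (Fin n') (Fin m) ℝ)
          (C' : Matrix (Fin p) (Fin n') ℝ) (D' : Matrix (Fin p) (Fin m) ℝ),
          Explaining L N T Tini ud yd uini yini A' B' C' D' → lag A' C' ≤ Tini) ∧
        (∃ yf : Fin Tf → Fin p → ℝ,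
          ∀ (n' : ℕ) (A' : Matrix (Fin n') (Fin n') ℝ) (B' : Matrix (Fin n') (Fin m) ℝ)
            (C' : Matrix (Fin p) (Fin n') ℝ) (D' : Matrix (Fin p) (Fin m) ℝ),
            Explaining L N T Tini ud yd uini yini A' B' C' D' →
            IsTraj A' B' C' D' (Tini + Tf) (Fin.append uini uf) (Fin.append yini yf))) := by
  constructor
  · rintro ⟨h1, h2⟩
    refine ⟨?_, h2⟩
    intro n' A' B' C' D' hexp
    obtain ⟨yf₀, hyf₀, huniq⟩ := h1 n' A' B' C' D' hexp
    have hrank : (obsMat A' C' Tini).rank = (obsMat A' C' (Tini + 1)).rank := by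
      rw [InfoPredAux.rank_eq_iff]
      intro z hz i hi
      rcases Nat.lt_or_ge i Tini with h | h
      · exact hz i h
      · have hi' : i = Tini := by omega
        rw [hi']
        obtain ⟨w, hw⟩ := InfoPredAux.extend_lemma A' B' C' D' uini yini uf hexp.2.2.2
        have hz0 : InfoPredAux.Ker0 A' C' Tini (0 : Fin n' → ℝ) := by
          intro i hi
          simp [Matrix.mulVec_zero]
        have t0 := hw 0 hz0
        have tz := hw z hz
        have he := (huniq _ t0).trans (huniq _ tz).symm
        have h0 := congrFun he ⟨0, hTf⟩
        simp only [Matrix.mulVec_zero, add_zero] at h0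
        have hv := left_eq_add.mp h0
        simpa using hv
    exact Nat.sInf_le hrank
  · rintro ⟨h1, h2⟩
    refine ⟨?_, h2⟩
    intro n' A' B' C' D' hexp
    obtain ⟨yf, hyf⟩ := h2
    refine ⟨yf, hyf _ _ _ _ _ hexp, ?_⟩
    intro yf' htraj'
    exact InfoPredAux.uniq_lemma A' B' C' D' _ yini yf' yf
      (InfoPredAux.stab A' C' (h1 n' A' B' C' D' hexp)) htraj' (hyf _ _ _ _ _ hexp)
end

section
/- Let (A,B,C,D) be a linear system and let (u, y) be a trajectory of length T of (A,B,C,D). Then for every k with 1 ≤ k ≤ T and every g ∈ ℝ^{T−k+1}, the pair (u_g, y_g) defined by u_g(i) = Σ_{j=0}^{T−k} g(j) u(i+j) and y_g(i) = Σ_{j=0}^{T−k} g(j) y(i+j) for 0 ≤ i ≤ k−1 (i.e., the pair obtained by applying the depth-k Hankel matrices of u and of y to g) is a trajectory of length k of (A,B,C,D). -/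
private lemma mulVec_sum' {a b : ℕ} (M : Matrix (Fin a) (Fin b) ℝ) {ι : Type*}
    (s : Finset ι) (f : ι → Fin b → ℝ) :
    M.mulVec (∑ j ∈ s, f j) = ∑ j ∈ s, M.mulVec (f j) := by
  ext i; simp [Matrix.mulVec, dotProduct, Finset.mul_sum]; exact Finset.sum_comm

/-- Applying the depth-`k` Hankel matrices of a trajectory `(u, y)` to a vector `g`
yields a trajectory of length `k` of the same system. -/
theorem hankel_image_is_trajectory {n m p T : ℕ}
    (A : Matrix (Fin n) (Fin n) ℝ) (B : Matrix (Fin n) (Fin m) ℝ)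
    (C : Matrix (Fin p) (Fin n) ℝ) (D : Matrix (Fin p) (Fin m) ℝ)
    (u : Fin T → Fin m → ℝ) (y : Fin T → Fin p → ℝ)
    (h : IsTraj A B C D T u y)
    (k : ℕ) (hk1 : 1 ≤ k) (hk2 : k ≤ T) (g : Fin (T - k + 1) → ℝ) :
    IsTraj A B C D k
      (fun i : Fin k =>
        ∑ j : Fin (T - k + 1), g j • u ⟨i + j, by have := i.2; have := j.2; omega⟩)
      (fun i : Fin k =>
        ∑ j : Fin (T - k + 1), g j • y ⟨i + j, by have := i.2; have := j.2; omega⟩) := by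
  obtain ⟨x, hx⟩ := h
  refine ⟨fun i : Fin (k + 1) =>
      ∑ j : Fin (T - k + 1), g j • x ⟨i + j, by have := i.2; have := j.2; omega⟩,
    fun t => ⟨?_, ?_⟩⟩
  · have h1 : ∀ j : Fin (T - k + 1),
        x ⟨(t.succ : ℕ) + j, by have := t.2; have := j.2; omega⟩ =
          A.mulVec (x ⟨(t.castSucc : ℕ) + j, by have := t.2; have := j.2; omega⟩)
            + B.mulVec (u ⟨(t : ℕ) + j, by have := t.2; have := j.2; omega⟩) := by
      intro j
      have := (hx ⟨(t : ℕ) + j, by have := t.2; have := j.2; omega⟩).1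
      convert this using 3 <;> simp [Fin.ext_iff] <;> omega
    simp only [h1, smul_add, Finset.sum_add_distrib]
    rw [mulVec_sum', mulVec_sum']
    simp [Matrix.mulVec_smul]
  · have h2 : ∀ j : Fin (T - k + 1),
        y ⟨(t : ℕ) + j, by have := t.2; have := j.2; omega⟩ =
          C.mulVec (x ⟨(t.castSucc : ℕ) + j, by have := t.2; have := j.2; omega⟩)
            + D.mulVec (u ⟨(t : ℕ) + j, by have := t.2; have := j.2; omega⟩) := by
      intro j
      have := (hx ⟨(t : ℕ) + j, by have := t.2; have := j.2; omega⟩).2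
      convert this using 3 <;> simp [Fin.ext_iff]
    simp only [h2, smul_add, Finset.sum_add_distrib]
    rw [mulVec_sum', mulVec_sum']
    simp [Matrix.mulVec_smul]
end

section
/- Let m = p = 1 and consider the scalar data sequences u_d = (1, −1, 1) and y_d = (0, 1, 0) of length 3. The one-dimensional systems S₁ = (A=1, B=1, C=1, D=0) and S₂ = (A=1, B=−1, C=1, D=−1) both have (u_d, y_d) as a trajectory of length 3, both have lag ℓ(C,A) = 1, and their sets of trajectories differ: the pair ((1,0), (0,1)) is a trajectory of length 2 of S₁ but is not a trajectory of length 2 of S₂. In particular, the data (u_d, y_d) is not informative for system identification within the class of systems of order at most 1 and lag at most 1. -/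
lemma obs_entry (k : ℕ) (ir : Fin k × Fin 1) (j : Fin 1) :
    obsMat (1 : Matrix (Fin 1) (Fin 1) ℝ) (1 : Matrix (Fin 1) (Fin 1) ℝ) k ir j = 1 := by
  simp [obsMat, Matrix.one_apply, Subsingleton.elim ir.2 j]

lemma rank0 :
    (obsMat (1 : Matrix (Fin 1) (Fin 1) ℝ) (1 : Matrix (Fin 1) (Fin 1) ℝ) 0).rank = 0 := by
  simpa using
    (obsMat (1 : Matrix (Fin 1) (Fin 1) ℝ) (1 : Matrix (Fin 1) (Fin 1) ℝ) 0).rank_le_card_height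

lemma rankk (k : ℕ) (hk : 0 < k) :
    (obsMat (1 : Matrix (Fin 1) (Fin 1) ℝ) (1 : Matrix (Fin 1) (Fin 1) ℝ) k).rank = 1 := by
  set M := obsMat (1 : Matrix (Fin 1) (Fin 1) ℝ) (1 : Matrix (Fin 1) (Fin 1) ℝ) k with hM
  refine le_antisymm (by simpa using M.rank_le_card_width) ?_
  rw [Nat.one_le_iff_ne_zero, Ne, Matrix.rank, Submodule.finrank_eq_zero]
  intro h
  have h2 : M.mulVec ![1] = 0 := by
    have := h ▸ LinearMap.mem_range_self M.mulVecLin ![1]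
    simpa using this
  have := congrFun h2 ⟨⟨0, hk⟩, 0⟩
  simp [hM, Matrix.mulVec, dotProduct, obs_entry] at this

lemma lag_one : lag (1 : Matrix (Fin 1) (Fin 1) ℝ) (1 : Matrix (Fin 1) (Fin 1) ℝ) = 1 := by
  unfold lag
  have h1 : 1 ∈ {k | (obsMat (1 : Matrix (Fin 1) (Fin 1) ℝ)
      (1 : Matrix (Fin 1) (Fin 1) ℝ) k).rank =
      (obsMat (1 : Matrix (Fin 1) (Fin 1) ℝ) (1 : Matrix (Fin 1) (Fin 1) ℝ) (k + 1)).rank} := by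
    simp only [Set.mem_setOf_eq, rankk 1 one_pos, rankk 2 two_pos]
  have h0 : 0 ∉ {k | (obsMat (1 : Matrix (Fin 1) (Fin 1) ℝ)
      (1 : Matrix (Fin 1) (Fin 1) ℝ) k).rank =
      (obsMat (1 : Matrix (Fin 1) (Fin 1) ℝ) (1 : Matrix (Fin 1) (Fin 1) ℝ) (k + 1)).rank} := by
    simp only [Set.mem_setOf_eq, rank0, rankk 1 one_pos]
    norm_num
  refine le_antisymm (Nat.sInf_le h1) ?_
  rw [Nat.one_le_iff_ne_zero]
  intro hz
  exact h0 (hz ▸ Nat.sInf_mem ⟨1, h1⟩)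

/-- The data `u_d = (1,-1,1)`, `y_d = (0,1,0)` is explained by both scalar systems
`S₁ = (1,1,1,0)` and `S₂ = (1,-1,1,-1)`, both of lag 1, whose trajectory sets differ;
hence the data is not informative for system identification in the class of systems of
order at most 1 and lag at most 1. -/
theorem not_informative_for_identification :
    IsTraj (1 : Matrix (Fin 1) (Fin 1) ℝ) (1 : Matrix (Fin 1) (Fin 1) ℝ)
      (1 : Matrix (Fin 1) (Fin 1) ℝ) (0 : Matrix (Fin 1) (Fin 1) ℝ) 3
      ![![1], ![-1], ![1]] ![![0], ![1], ![0]] ∧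
    IsTraj (1 : Matrix (Fin 1) (Fin 1) ℝ) (-1 : Matrix (Fin 1) (Fin 1) ℝ)
      (1 : Matrix (Fin 1) (Fin 1) ℝ) (-1 : Matrix (Fin 1) (Fin 1) ℝ) 3
      ![![1], ![-1], ![1]] ![![0], ![1], ![0]] ∧
    lag (1 : Matrix (Fin 1) (Fin 1) ℝ) (1 : Matrix (Fin 1) (Fin 1) ℝ) = 1 ∧
    IsTraj (1 : Matrix (Fin 1) (Fin 1) ℝ) (1 : Matrix (Fin 1) (Fin 1) ℝ)
      (1 : Matrix (Fin 1) (Fin 1) ℝ) (0 : Matrix (Fin 1) (Fin 1) ℝ) 2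
      ![![1], ![0]] ![![0], ![1]] ∧
    ¬ IsTraj (1 : Matrix (Fin 1) (Fin 1) ℝ) (-1 : Matrix (Fin 1) (Fin 1) ℝ)
      (1 : Matrix (Fin 1) (Fin 1) ℝ) (-1 : Matrix (Fin 1) (Fin 1) ℝ) 2
      ![![1], ![0]] ![![0], ![1]] ∧
    ¬ (∀ (n₁ n₂ : ℕ), n₁ ≤ 1 → n₂ ≤ 1 →
        ∀ (A₁ : Matrix (Fin n₁) (Fin n₁) ℝ) (B₁ : Matrix (Fin n₁) (Fin 1) ℝ)
          (C₁ : Matrix (Fin 1) (Fin n₁) ℝ) (D₁ : Matrix (Fin 1) (Fin 1) ℝ)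
          (A₂ : Matrix (Fin n₂) (Fin n₂) ℝ) (B₂ : Matrix (Fin n₂) (Fin 1) ℝ)
          (C₂ : Matrix (Fin 1) (Fin n₂) ℝ) (D₂ : Matrix (Fin 1) (Fin 1) ℝ),
          lag A₁ C₁ ≤ 1 → lag A₂ C₂ ≤ 1 →
          IsTraj A₁ B₁ C₁ D₁ 3 ![![1], ![-1], ![1]] ![![0], ![1], ![0]] →
          IsTraj A₂ B₂ C₂ D₂ 3 ![![1], ![-1], ![1]] ![![0], ![1], ![0]] →
          ∀ (T' : ℕ) (u : Fin T' → Fin 1 → ℝ) (y : Fin T' → Fin 1 → ℝ),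
            IsTraj A₁ B₁ C₁ D₁ T' u y ↔ IsTraj A₂ B₂ C₂ D₂ T' u y) := by
  have hT1 : IsTraj (1 : Matrix (Fin 1) (Fin 1) ℝ) (1 : Matrix (Fin 1) (Fin 1) ℝ)
      (1 : Matrix (Fin 1) (Fin 1) ℝ) (0 : Matrix (Fin 1) (Fin 1) ℝ) 3
      ![![1], ![-1], ![1]] ![![0], ![1], ![0]] := by
    refine ⟨![![0], ![1], ![0], ![1]], fun t => ?_⟩
    fin_cases t <;>
      constructor <;>
      · funext i
        fin_cases i
        norm_num [Matrix.mulVec, dotProduct, Fin.sum_univ_one, Fin.succ, Fin.castSucc,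
          Fin.castAdd, Fin.castLE, Matrix.one_apply]
  have hT2 : IsTraj (1 : Matrix (Fin 1) (Fin 1) ℝ) (-1 : Matrix (Fin 1) (Fin 1) ℝ)
      (1 : Matrix (Fin 1) (Fin 1) ℝ) (-1 : Matrix (Fin 1) (Fin 1) ℝ) 3
      ![![1], ![-1], ![1]] ![![0], ![1], ![0]] := by
    refine ⟨![![1], ![0], ![1], ![0]], fun t => ?_⟩
    fin_cases t <;>
      constructor <;>
      · funext i
        fin_cases i
        norm_num [Matrix.mulVec, dotProduct, Fin.sum_univ_one, Fin.succ, Fin.castSucc,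
          Fin.castAdd, Fin.castLE, Matrix.one_apply, Matrix.neg_apply]
  have hS1 : IsTraj (1 : Matrix (Fin 1) (Fin 1) ℝ) (1 : Matrix (Fin 1) (Fin 1) ℝ)
      (1 : Matrix (Fin 1) (Fin 1) ℝ) (0 : Matrix (Fin 1) (Fin 1) ℝ) 2
      ![![1], ![0]] ![![0], ![1]] := by
    refine ⟨![![0], ![1], ![1]], fun t => ?_⟩
    fin_cases t <;>
      constructor <;>
      · funext i
        fin_cases i
        norm_num [Matrix.mulVec, dotProduct, Fin.sum_univ_one, Fin.succ, Fin.castSucc,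
          Fin.castAdd, Fin.castLE, Matrix.one_apply]
  have hS2 : ¬ IsTraj (1 : Matrix (Fin 1) (Fin 1) ℝ) (-1 : Matrix (Fin 1) (Fin 1) ℝ)
      (1 : Matrix (Fin 1) (Fin 1) ℝ) (-1 : Matrix (Fin 1) (Fin 1) ℝ) 2
      ![![1], ![0]] ![![0], ![1]] := by
    rintro ⟨x, hx⟩
    have e0 := congrFun (hx 0).2 0
    have e1 := congrFun (hx 0).1 0
    have e2 := congrFun (hx 1).2 0
    norm_num [Matrix.mulVec, dotProduct, Fin.sum_univ_one, Fin.succ, Fin.castSucc,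
      Fin.castAdd, Fin.castLE, Matrix.one_apply, Matrix.neg_apply] at e0 e1 e2
    linarith
  refine ⟨hT1, hT2, lag_one, hS1, hS2, fun h => ?_⟩
  exact hS2 ((h 1 1 le_rfl le_rfl _ _ _ _ _ _ _ _ lag_one.le lag_one.le hT1 hT2 2
    ![![1], ![0]] ![![0], ![1]]).mp hS1)
end

section
/- Let m = p = 1, L = N = 1, data u_d = (1, −1, 1), y_d = (0, 1, 0) of length T = 3, initial data u_ini = (−2), y_ini = (1) of length T_ini = 1. For every explaining system (n', A', B', C', D') (i.e., n' ≤ 1, ℓ(C',A') ≤ 1, and both (u_d, y_d) and (u_ini, y_ini) are trajectories of it), the pair ((−2, 2, −2), (1, −1, 1)) is a trajectory of length 3 of (A',B',C',D'), and (y_f(0), y_f(1)) = (−1, 1) is the unique pair in ℝ² such that ((−2, 2, −2), (1, y_f(0), y_f(1))) is a trajectory of length 3 of (A',B',C',D'). -/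
/-- For the data `u_d = (1,-1,1)`, `y_d = (0,1,0)`, initial data `u_ini = (-2)`,
`y_ini = (1)`, bounds `L = N = 1`: every explaining system has `((-2,2,-2),(1,-1,1))`
as a trajectory, and `(-1,1)` is the unique future output for the input `(2,-2)`. -/
theorem example_unique_prediction :
    ∀ (n' : ℕ) (A' : Matrix (Fin n') (Fin n') ℝ) (B' : Matrix (Fin n') (Fin 1) ℝ)
      (C' : Matrix (Fin 1) (Fin n') ℝ) (D' : Matrix (Fin 1) (Fin 1) ℝ),
      Explaining 1 1 3 1
        (![![1], ![-1], ![1]] : Fin 3 → Fin 1 → ℝ)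
        (![![0], ![1], ![0]] : Fin 3 → Fin 1 → ℝ)
        (![![(-2 : ℝ)]]) (![![(1 : ℝ)]]) A' B' C' D' →
      IsTraj A' B' C' D' 3
        (![![-2], ![2], ![-2]] : Fin 3 → Fin 1 → ℝ)
        (![![1], ![-1], ![1]] : Fin 3 → Fin 1 → ℝ) ∧
      ∀ yf : Fin 2 → Fin 1 → ℝ,
        IsTraj A' B' C' D' (1 + 2)
          (![![-2], ![2], ![-2]] : Fin 3 → Fin 1 → ℝ)
          (Fin.append (![![(1 : ℝ)]]) yf) →
        yf = (![![-1], ![1]] : Fin 2 → Fin 1 → ℝ) := by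
  intro n' A' B' C' D' hexp
  obtain ⟨hn, hlag, hd, hi⟩ := hexp
  interval_cases n'
  · -- n' = 0 : contradiction
    obtain ⟨x, hx⟩ := hd
    have h0 := congrFun (hx 0).2 0
    have h1 := congrFun (hx 1).2 0
    simp [Matrix.mulVec, dotProduct] at h0 h1
    linarith
  · obtain ⟨x, hx⟩ := hd
    obtain ⟨z, hz⟩ := hi
    have e1 := congrFun (hx 0).1 0
    have e2 := congrFun (hx 0).2 0
    have e3 := congrFun (hx 1).1 0
    have e4 := congrFun (hx 1).2 0
    have e6 := congrFun (hx 2).2 0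
    have ei := congrFun (hz 0).2 0
    have hc2 : (Fin.castSucc 2 : Fin 4) = 2 := rfl
    simp [Matrix.mulVec, dotProduct, Fin.sum_univ_one, hc2] at e1 e2 e3 e4 e6 ei
    have ha : A' 0 0 = 1 := by
      linear_combination (-(C' 0 0)) * e1 - C' 0 0 * e3 + (A' 0 0 - 1) * e4 + A' 0 0 * e2 - e6
    rw [ha] at e1 e3
    have hcb : C' 0 0 * B' 0 0 = 1 + 2 * D' 0 0 := by
      linear_combination -e4 + e2 - C' 0 0 * e1
    have hz0 : C' 0 0 * z 0 0 = 1 + 2 * D' 0 0 := by linarith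
    constructor
    · refine ⟨![z 0, fun _ => z 0 0 - 2 * B' 0 0, z 0, fun _ => z 0 0 - 2 * B' 0 0], ?_⟩
      intro t
      fin_cases t <;>
        refine ⟨funext fun i => ?_, funext fun i => ?_⟩ <;> fin_cases i <;>
          simp [Matrix.mulVec, dotProduct, Fin.sum_univ_one, ha, hc2] <;> nlinarith [hcb, hz0]
    · rintro yf ⟨v, hv⟩
      have f1 := congrFun (hv 0).2 0
      have f2 := congrFun (hv 0).1 0
      have f3 := congrFun (hv 1).2 0
      have f4 := congrFun (hv 1).1 0
      have f5 := congrFun (hv 2).2 0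
      simp [Matrix.mulVec, dotProduct, Fin.sum_univ_one, Fin.append, Fin.addCases, ha, hc2, Fin.subNat, Fin.ext_iff]
        at f1 f2 f3 f4 f5
      funext i j
      fin_cases i <;> fin_cases j <;> simp
      · linear_combination f3 + C' 0 0 * f2 - f1 - 2 * hcb
      · linear_combination f5 + C' 0 0 * f4 + C' 0 0 * f2 - f1
end
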